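/- arXiv:1706.01618 — 4 statements merged into one kernel-verified Lean document; each statement's English description precedes it below -/
import Mathlib

section
/- For every metric ρ on ℝ² that induces the standard (Euclidean) topology of ℝ², there exist three distinct points x₀, x₁, x₂ in ℝ² that form an equilateral set with respect to ρ, i.e. ρ(x₀, x₁) = ρ(x₁, x₂) = ρ(x₂, x₀). (Consequently the Borsuk number of ℝ² is 3.) -/
open Real Set

noncomputable section

namespace BorsukAux

/-- clamp to `[0,1]`. -/
def clamp (x : ℝ) : ℝ := min 1 (max 0 x)

lemma clamp_nonpos {x : ℝ} (h : x ≤ 0) : clamp x = 0 := by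
  unfold clamp; rw [max_eq_left h]; exact min_eq_right zero_le_one

lemma clamp_ge_one {x : ℝ} (h : 1 ≤ x) : clamp x = 1 := by
  unfold clamp; rw [max_eq_right (le_trans zero_le_one h)]; exact min_eq_left h

lemma clamp_mem {x : ℝ} (h0 : 0 ≤ x) (h1 : x ≤ 1) : clamp x = x := by
  unfold clamp; rw [max_eq_right h0]; exact min_eq_right h1

lemma clamp_cont : Continuous clamp :=
  continuous_const.min (continuous_const.max continuous_id)

/-- values cannot jump over a forbidden 2π-grid. -/
lemma window {g : ℝ → ℝ} {α β bad : ℝ} (hab : α ≤ β)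
    (hg : ContinuousOn g (Icc α β))
    (hbad : ∀ t ∈ Icc α β, ∀ k : ℤ, g t ≠ bad + 2*π*k)
    (h1 : bad < g α) (h2 : g α < bad + 2*π) :
    ∀ t ∈ Icc α β, bad < g t ∧ g t < bad + 2*π := by
  intro t ht
  have hαt : α ≤ t := ht.1
  have hsub : Icc α t ⊆ Icc α β := Icc_subset_Icc le_rfl ht.2
  constructor
  · by_contra hle
    push_neg at hle
    have hne : g t ≠ bad := by
      have := hbad t ht 0
      simpa using this
    have hlt : g t < bad := lt_of_le_of_ne hle hne
    have hmem : bad ∈ Icc (g t) (g α) := ⟨le_of_lt hlt, le_of_lt h1⟩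
    obtain ⟨c, hc, hgc⟩ := intermediate_value_Icc' hαt (hg.mono hsub) hmem
    have := hbad c (hsub hc) 0
    simp only [Int.cast_zero, mul_zero, add_zero] at this
    exact this hgc
  · by_contra hle
    push_neg at hle
    have hne : g t ≠ bad + 2*π := by
      have := hbad t ht 1
      simpa using this
    have hlt : bad + 2*π < g t := lt_of_le_of_ne hle (Ne.symm hne)
    have hmem : bad + 2*π ∈ Icc (g α) (g t) := ⟨le_of_lt h2, le_of_lt hlt⟩
    obtain ⟨c, hc, hgc⟩ := intermediate_value_Icc hαt (hg.mono hsub) hmem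
    have := hbad c (hsub hc) 1
    simp only [Int.cast_one, mul_one] at this
    exact this hgc

lemma pin {θ base base' bad : ℝ} (hθ : ∃ k : ℤ, θ = base + 2*π*k)
    (hbase : ∃ j : ℤ, base' = base + 2*π*j)
    (h1 : bad < θ) (h2 : θ < bad + 2*π) (h3 : bad < base') (h4 : base' < bad + 2*π) :
    θ = base' := by
  obtain ⟨k, hk⟩ := hθ; obtain ⟨j, hj⟩ := hbase
  have hπ : (0:ℝ) < π := Real.pi_pos
  have hd : θ - base' = 2*π*((k:ℝ) - (j:ℝ)) := by rw [hk, hj]; ring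
  have hub : 2*π*((k:ℝ) - (j:ℝ)) < 2*π*1 := by rw [← hd]; linarith
  have hlb : 2*π*(-1:ℝ) < 2*π*((k:ℝ) - (j:ℝ)) := by rw [← hd]; linarith
  have h2π : (0:ℝ) < 2*π := by linarith
  have hub' : (k:ℝ) - (j:ℝ) < 1 := lt_of_mul_lt_mul_left hub (le_of_lt h2π)
  have hlb' : (-1:ℝ) < (k:ℝ) - (j:ℝ) := lt_of_mul_lt_mul_left hlb (le_of_lt h2π)
  have hkj : k = j := by
    have hub'' : k - j < 1 := by exact_mod_cast (by push_cast; linarith : ((k - j : ℤ):ℝ) < 1)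
    have hlb'' : (-1:ℤ) < k - j := by exact_mod_cast (by push_cast; linarith : ((-1:ℤ):ℝ) < ((k - j : ℤ):ℝ))
    omega
  rw [hk, hj, hkj]

lemma typeA {E s θ : ℝ} (hs : 0 < s) (h1 : Real.exp E * Real.cos θ = -s)
    (h2 : Real.exp E * Real.sin θ = 0) : ∃ k : ℤ, θ = π + 2*π*k := by
  have hE := Real.exp_pos E
  have hsin : Real.sin θ = 0 := by
    rcases mul_eq_zero.1 h2 with h | h
    · exact absurd h (ne_of_gt hE)
    · exact h
  have hcos : Real.cos θ < 0 := by nlinarith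
  obtain ⟨n, hn⟩ := Real.sin_eq_zero_iff.1 hsin
  rcases Int.even_or_odd n with ⟨m, hm⟩ | ⟨m, hm⟩
  · exfalso
    have hθ : θ = 0 + (m:ℝ)*(2*π) := by rw [← hn, hm]; push_cast; ring
    have : Real.cos θ = 1 := by rw [hθ, Real.cos_add_int_mul_two_pi, Real.cos_zero]
    linarith
  · refine ⟨m, ?_⟩
    rw [← hn, hm]; push_cast; ring

lemma typeB {E s θ : ℝ} (hs : 0 < s) (h1 : Real.exp E * Real.cos θ = s)
    (h2 : Real.exp E * Real.sin θ = -s) : ∃ k : ℤ, θ = -(π/4) + 2*π*k := by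
  have hE := Real.exp_pos E
  have hcos : 0 < Real.cos θ := by nlinarith
  have hsum : Real.cos θ + Real.sin θ = 0 := by
    have h3 : Real.exp E * (Real.cos θ + Real.sin θ) = 0 := by rw [mul_add, h1, h2]; ring
    rcases mul_eq_zero.1 h3 with h | h
    · exact absurd h (ne_of_gt hE)
    · exact h
  have h2' : Real.sqrt 2 > 0 := Real.sqrt_pos.2 (by norm_num)
  have hzero : Real.sin (θ + π/4) = 0 := by
    rw [Real.sin_add, Real.cos_pi_div_four, Real.sin_pi_div_four]
    nlinarith [hsum]
  obtain ⟨n, hn⟩ := Real.sin_eq_zero_iff.1 hzero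
  rcases Int.even_or_odd n with ⟨m, hm⟩ | ⟨m, hm⟩
  · refine ⟨m, ?_⟩
    rw [hm] at hn; push_cast at hn; linarith
  · exfalso
    have hθ : θ = 3*π/4 + (m:ℝ)*(2*π) := by rw [hm] at hn; push_cast at hn; linarith
    have hc : Real.cos θ = Real.cos (3*π/4) := by rw [hθ, Real.cos_add_int_mul_two_pi]
    have h34 : (3*π/4 : ℝ) = π - π/4 := by ring
    rw [h34, Real.cos_pi_sub, Real.cos_pi_div_four] at hc
    nlinarith
lemma typeC {E s θ : ℝ} (hs : 0 < s) (h1 : Real.exp E * Real.cos θ = 0)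
    (h2 : Real.exp E * Real.sin θ = s) : ∃ k : ℤ, θ = π/2 + 2*π*k := by
  have hE := Real.exp_pos E
  have hcos : Real.cos θ = 0 := by
    rcases mul_eq_zero.1 h1 with h | h
    · exact absurd h (ne_of_gt hE)
    · exact h
  have hsin : 0 < Real.sin θ := by nlinarith
  obtain ⟨n, hn⟩ := Real.cos_eq_zero_iff.1 hcos
  rcases Int.even_or_odd n with ⟨m, hm⟩ | ⟨m, hm⟩
  · refine ⟨m, ?_⟩
    rw [hn, hm]; push_cast; ring
  · exfalso
    have hθ : θ = 3*π/2 + (m:ℝ)*(2*π) := by rw [hn, hm]; push_cast; ring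
    have hsθ : Real.sin θ = Real.sin (3*π/2) := by rw [hθ, Real.sin_add_int_mul_two_pi]
    have h32 : (3*π/2 : ℝ) = π + π/2 := by ring
    rw [h32, Real.sin_add, Real.sin_pi, Real.cos_pi, Real.sin_pi_div_two] at hsθ
    simp at hsθ
    linarith

lemma ratio_slit {z w : ℂ} (hz : z ≠ 0) (h : ‖w - z‖ < ‖z‖) :
    w / z ∈ Complex.slitPlane := by
  have hz' : 0 < ‖z‖ := norm_pos_iff.2 hz
  have hsmall : ‖w/z - 1‖ < 1 := by
    have : w/z - 1 = (w - z)/z := by field_simp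
    rw [this, norm_div]
    exact (div_lt_one hz').2 h
  refine Complex.mem_slitPlane_iff.2 (Or.inl ?_)
  have hre : |(w/z - 1).re| ≤ ‖w/z - 1‖ := by
    exact Complex.abs_re_le_norm _
  have hre' : (w/z).re = 1 + (w/z - 1).re := by simp
  have := abs_lt.1 (lt_of_le_of_lt hre hsmall)
  rw [hre']; linarith [this.1]

abbrev EE := EuclideanSpace ℝ (Fin 2)

def ee : EE := EuclideanSpace.single 0 1
def ee' : EE := EuclideanSpace.single 1 1

lemma ee_0 : ee 0 = 1 := by simp [ee, EuclideanSpace.single_apply]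
lemma ee_1 : ee 1 = 0 := by simp [ee, EuclideanSpace.single_apply]
lemma ee'_0 : ee' 0 = 0 := by simp [ee', EuclideanSpace.single_apply]
lemma ee'_1 : ee' 1 = 1 := by simp [ee', EuclideanSpace.single_apply]

lemma ee_ne : ee ≠ 0 := by
  intro h
  have : ee 0 = 0 := by rw [h]; rfl
  rw [ee_0] at this; norm_num at this

def fa (t₁ t : ℝ) : ℝ := t₁ * clamp (min (6*t - 2) (6 - 6*t))
def fb (t₁ t : ℝ) : ℝ := t₁ * clamp (min (6*t) (4 - 6*t))
def fc (t₁ t : ℝ) : ℝ := t₁ * clamp (max (2 - 6*t) (6*t - 4))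

lemma fa_cont (t₁ : ℝ) : Continuous (fa t₁) := by
  unfold fa
  exact continuous_const.mul (clamp_cont.comp ((by continuity : Continuous fun t : ℝ => 6*t - 2).min (by continuity)))

lemma fb_cont (t₁ : ℝ) : Continuous (fb t₁) := by
  unfold fb
  exact continuous_const.mul (clamp_cont.comp ((by continuity : Continuous fun t : ℝ => 6*t).min (by continuity)))

lemma fc_cont (t₁ : ℝ) : Continuous (fc t₁) := by
  unfold fc
  exact continuous_const.mul (clamp_cont.comp ((by continuity : Continuous fun t : ℝ => 2 - 6*t).max (by continuity)))

section stages
variable {t₁ t : ℝ}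

lemma stage1 (h0 : 0 ≤ t) (h1 : t ≤ 1/6) :
    fa t₁ t = 0 ∧ fb t₁ t = t₁ * (6*t) ∧ fc t₁ t = t₁ := by
  refine ⟨?_, ?_, ?_⟩
  · unfold fa; rw [min_eq_left (by linarith), clamp_nonpos (by linarith), mul_zero]
  · unfold fb; rw [min_eq_left (by linarith), clamp_mem (by linarith) (by linarith)]
  · unfold fc; rw [max_eq_left (by linarith), clamp_ge_one (by linarith), mul_one]

lemma stage2 (h0 : 1/6 ≤ t) (h1 : t ≤ 2/6) :
    fa t₁ t = 0 ∧ fb t₁ t = t₁ ∧ fc t₁ t = t₁ * (2 - 6*t) := by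
  refine ⟨?_, ?_, ?_⟩
  · unfold fa; rw [min_eq_left (by linarith), clamp_nonpos (by linarith), mul_zero]
  · unfold fb; rw [min_eq_left (by linarith), clamp_ge_one (by linarith), mul_one]
  · unfold fc; rw [max_eq_left (by linarith), clamp_mem (by linarith) (by linarith)]

lemma stage3 (h0 : 2/6 ≤ t) (h1 : t ≤ 3/6) :
    fa t₁ t = t₁ * (6*t - 2) ∧ fb t₁ t = t₁ ∧ fc t₁ t = 0 := by
  refine ⟨?_, ?_, ?_⟩
  · unfold fa; rw [min_eq_left (by linarith), clamp_mem (by linarith) (by linarith)]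
  · unfold fb; rw [min_eq_right (by linarith), clamp_ge_one (by linarith), mul_one]
  · unfold fc; rw [max_eq_left (by linarith), clamp_nonpos (by linarith), mul_zero]

lemma stage4 (h0 : 3/6 ≤ t) (h1 : t ≤ 4/6) :
    fa t₁ t = t₁ ∧ fb t₁ t = t₁ * (4 - 6*t) ∧ fc t₁ t = 0 := by
  refine ⟨?_, ?_, ?_⟩
  · unfold fa
    rcases le_total (6*t - 2) (6 - 6*t) with h | h
    · rw [min_eq_left h, clamp_ge_one (by linarith), mul_one]
    · rw [min_eq_right h, clamp_ge_one (by linarith), mul_one]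
  · unfold fb; rw [min_eq_right (by linarith), clamp_mem (by linarith) (by linarith)]
  · unfold fc; rw [max_eq_right (by linarith), clamp_nonpos (by linarith), mul_zero]

lemma stage5 (h0 : 4/6 ≤ t) (h1 : t ≤ 5/6) :
    fa t₁ t = t₁ ∧ fb t₁ t = 0 ∧ fc t₁ t = t₁ * (6*t - 4) := by
  refine ⟨?_, ?_, ?_⟩
  · unfold fa; rw [min_eq_right (by linarith), clamp_ge_one (by linarith), mul_one]
  · unfold fb; rw [min_eq_right (by linarith), clamp_nonpos (by linarith), mul_zero]
  · unfold fc; rw [max_eq_right (by linarith), clamp_mem (by linarith) (by linarith)]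

lemma stage6 (h0 : 5/6 ≤ t) (h1 : t ≤ 1) :
    fa t₁ t = t₁ * (6 - 6*t) ∧ fb t₁ t = 0 ∧ fc t₁ t = t₁ := by
  refine ⟨?_, ?_, ?_⟩
  · unfold fa; rw [min_eq_right (by linarith), clamp_mem (by linarith) (by linarith)]
  · unfold fb; rw [min_eq_right (by linarith), clamp_nonpos (by linarith), mul_zero]
  · unfold fc; rw [max_eq_right (by linarith), clamp_ge_one (by linarith), mul_one]

lemma fabc_ne (ht₁ : 0 < t₁) (h0 : 0 ≤ t) (h1 : t ≤ 1) :
    ¬(fa t₁ t = fb t₁ t ∧ fb t₁ t = fc t₁ t) := by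
  rintro ⟨hab, hbc⟩
  rcases le_total t (1/6) with h | h
  · obtain ⟨ha, _, hc⟩ := stage1 (t₁ := t₁) h0 h
    have := hab.trans hbc; rw [ha, hc] at this; linarith
  rcases le_total t (2/6) with h' | h'
  · obtain ⟨ha, hb, _⟩ := stage2 (t₁ := t₁) h h'
    rw [ha, hb] at hab; linarith
  rcases le_total t (3/6) with h'' | h''
  · obtain ⟨_, hb, hc⟩ := stage3 (t₁ := t₁) h' h''
    rw [hb, hc] at hbc; linarith
  rcases le_total t (4/6) with h3 | h3
  · obtain ⟨ha, _, hc⟩ := stage4 (t₁ := t₁) h'' h3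
    have := hab.trans hbc; rw [ha, hc] at this; linarith
  rcases le_total t (5/6) with h4 | h4
  · obtain ⟨ha, hb, _⟩ := stage5 (t₁ := t₁) h3 h4
    rw [ha, hb] at hab; linarith
  · obtain ⟨_, hb, hc⟩ := stage6 (t₁ := t₁) h4 h1
    rw [hb, hc] at hbc; linarith

lemma f_loop (t₁ : ℝ) : fa t₁ 0 = fa t₁ 1 ∧ fb t₁ 0 = fb t₁ 1 ∧ fc t₁ 0 = fc t₁ 1 := by
  obtain ⟨ha0, hb0, hc0⟩ := stage1 (t₁ := t₁) (t := 0) (by norm_num) (by norm_num)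
  obtain ⟨ha1, hb1, hc1⟩ := stage6 (t₁ := t₁) (t := 1) (by norm_num) (by norm_num)
  refine ⟨?_, ?_, ?_⟩
  · rw [ha0, ha1]; ring
  · rw [hb0, hb1]; ring
  · rw [hc0, hc1]

end stages

def XX (t₁ : ℝ) (p : ℝ × ℝ) : EE := ((1 - p.1) * fa t₁ p.2) • ee + p.1 • ee'
def YY (t₁ : ℝ) (p : ℝ × ℝ) : EE := ((1 - p.1) * fb t₁ p.2) • ee
def ZZ (t₁ : ℝ) (p : ℝ × ℝ) : EE := ((1 - p.1) * fc t₁ p.2) • ee - p.1 • ee'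

def FF (ρ : EE → EE → ℝ) (t₁ : ℝ) (p : ℝ × ℝ) : ℂ :=
  ((ρ (XX t₁ p) (YY t₁ p) - ρ (YY t₁ p) (ZZ t₁ p) : ℝ) : ℂ) +
  ((ρ (YY t₁ p) (ZZ t₁ p) - ρ (ZZ t₁ p) (XX t₁ p) : ℝ) : ℂ) * Complex.I

lemma FF_re (ρ : EE → EE → ℝ) (t₁ : ℝ) (p : ℝ × ℝ) :
    (FF ρ t₁ p).re = ρ (XX t₁ p) (YY t₁ p) - ρ (YY t₁ p) (ZZ t₁ p) := by
  simp [FF]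

lemma FF_im (ρ : EE → EE → ℝ) (t₁ : ℝ) (p : ℝ × ℝ) :
    (FF ρ t₁ p).im = ρ (YY t₁ p) (ZZ t₁ p) - ρ (ZZ t₁ p) (XX t₁ p) := by
  simp [FF]

lemma XX_cont (t₁ : ℝ) : Continuous (XX t₁) := by
  unfold XX
  exact (((continuous_const.sub continuous_fst).mul
    ((fa_cont t₁).comp continuous_snd)).smul continuous_const).add
    (continuous_fst.smul continuous_const)

lemma YY_cont (t₁ : ℝ) : Continuous (YY t₁) := by
  unfold YY
  exact ((continuous_const.sub continuous_fst).mul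
    ((fb_cont t₁).comp continuous_snd)).smul continuous_const

lemma ZZ_cont (t₁ : ℝ) : Continuous (ZZ t₁) := by
  unfold ZZ
  exact (((continuous_const.sub continuous_fst).mul
    ((fc_cont t₁).comp continuous_snd)).smul continuous_const).sub
    (continuous_fst.smul continuous_const)

lemma FF_cont {ρ : EE → EE → ℝ} (hρ : Continuous fun q : EE × EE => ρ q.1 q.2) (t₁ : ℝ) :
    Continuous (FF ρ t₁) := by
  unfold FF
  have h1 : Continuous fun p => ρ (XX t₁ p) (YY t₁ p) :=
    hρ.comp ((XX_cont t₁).prodMk (YY_cont t₁))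
  have h2 : Continuous fun p => ρ (YY t₁ p) (ZZ t₁ p) :=
    hρ.comp ((YY_cont t₁).prodMk (ZZ_cont t₁))
  have h3 : Continuous fun p => ρ (ZZ t₁ p) (XX t₁ p) :=
    hρ.comp ((ZZ_cont t₁).prodMk (XX_cont t₁))
  exact (Complex.continuous_ofReal.comp (h1.sub h2)).add
    ((Complex.continuous_ofReal.comp (h2.sub h3)).mul continuous_const)

-- coordinates
lemma XX_coord (t₁ : ℝ) (p : ℝ × ℝ) :
    XX t₁ p 0 = (1 - p.1) * fa t₁ p.2 ∧ XX t₁ p 1 = p.1 := by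
  constructor
  · show ((((1 - p.1) * fa t₁ p.2) • ee + p.1 • ee') : EE) 0 = _
    simp [PiLp.add_apply, PiLp.smul_apply, ee_0, ee'_0, smul_eq_mul]
  · show ((((1 - p.1) * fa t₁ p.2) • ee + p.1 • ee') : EE) 1 = _
    simp [PiLp.add_apply, PiLp.smul_apply, ee_1, ee'_1, smul_eq_mul]

lemma YY_coord (t₁ : ℝ) (p : ℝ × ℝ) :
    YY t₁ p 0 = (1 - p.1) * fb t₁ p.2 ∧ YY t₁ p 1 = 0 := by
  constructor
  · show ((((1 - p.1) * fb t₁ p.2) • ee) : EE) 0 = _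
    simp [PiLp.smul_apply, ee_0, smul_eq_mul]
  · show ((((1 - p.1) * fb t₁ p.2) • ee) : EE) 1 = _
    simp [PiLp.smul_apply, ee_1, smul_eq_mul]

lemma ZZ_coord (t₁ : ℝ) (p : ℝ × ℝ) :
    ZZ t₁ p 0 = (1 - p.1) * fc t₁ p.2 ∧ ZZ t₁ p 1 = -p.1 := by
  constructor
  · show ((((1 - p.1) * fc t₁ p.2) • ee - p.1 • ee') : EE) 0 = _
    simp [PiLp.sub_apply, PiLp.smul_apply, ee_0, ee'_0, smul_eq_mul]
  · show ((((1 - p.1) * fc t₁ p.2) • ee - p.1 • ee') : EE) 1 = _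
    simp [PiLp.sub_apply, PiLp.smul_apply, ee_1, ee'_1, smul_eq_mul]

-- values at u = 0
lemma XX_zero (t₁ t : ℝ) : XX t₁ (0, t) = fa t₁ t • ee := by
  unfold XX; simp

lemma YY_zero (t₁ t : ℝ) : YY t₁ (0, t) = fb t₁ t • ee := by
  unfold YY; simp

lemma ZZ_zero (t₁ t : ℝ) : ZZ t₁ (0, t) = fc t₁ t • ee := by
  unfold ZZ; simp

-- values at u = 1
lemma XYZ_one (t₁ t : ℝ) : XX t₁ (1, t) = ee' ∧ YY t₁ (1, t) = 0 ∧ ZZ t₁ (1, t) = -ee' := by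
  unfold XX YY ZZ; norm_num

section signs

variable {ρ : EE → EE → ℝ} {t₁ : ℝ}

lemma sign1 (hsym : ∀ x y, ρ x y = ρ y x)
    (hmax : ∀ τ : ℝ, 0 ≤ τ → τ ≤ 1 → ρ 0 (τ • ee) ≤ ρ 0 (t₁ • ee))
    (ht₁0 : 0 ≤ t₁) (ht₁1 : t₁ ≤ 1) :
    ∀ t, 0 ≤ t → t ≤ 1/6 → (FF ρ t₁ (0,t)).re + (FF ρ t₁ (0,t)).im ≤ 0 := by
  intro t h0 h1
  obtain ⟨ha, hb, hc⟩ := stage1 (t₁ := t₁) h0 h1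
  rw [FF_re, FF_im, XX_zero, YY_zero, ZZ_zero, ha, hb, hc, zero_smul]
  have h2 : ρ (t₁ • ee) (0 : EE) = ρ 0 (t₁ • ee) := hsym _ _
  have h3 : ρ 0 ((t₁*(6*t)) • ee) ≤ ρ 0 (t₁ • ee) :=
    hmax _ (mul_nonneg ht₁0 (by linarith)) (mul_le_one₀ ht₁1 (by linarith) (by linarith))
  linarith

lemma sign2 (hsym : ∀ x y, ρ x y = ρ y x)
    (hmax : ∀ τ : ℝ, 0 ≤ τ → τ ≤ 1 → ρ 0 (τ • ee) ≤ ρ 0 (t₁ • ee))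
    (ht₁0 : 0 ≤ t₁) (ht₁1 : t₁ ≤ 1) :
    ∀ t, 1/6 ≤ t → t ≤ 2/6 → 0 ≤ (FF ρ t₁ (0,t)).re + (FF ρ t₁ (0,t)).im := by
  intro t h0 h1
  obtain ⟨ha, hb, hc⟩ := stage2 (t₁ := t₁) h0 h1
  rw [FF_re, FF_im, XX_zero, YY_zero, ZZ_zero, ha, hb, hc, zero_smul]
  have h2 : ρ ((t₁*(2-6*t)) • ee) (0 : EE) = ρ 0 ((t₁*(2-6*t)) • ee) := hsym _ _
  have h3 : ρ 0 ((t₁*(2-6*t)) • ee) ≤ ρ 0 (t₁ • ee) :=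
    hmax _ (mul_nonneg ht₁0 (by linarith)) (mul_le_one₀ ht₁1 (by linarith) (by linarith))
  linarith

lemma sign3 (hsym : ∀ x y, ρ x y = ρ y x)
    (hmax : ∀ τ : ℝ, 0 ≤ τ → τ ≤ 1 → ρ 0 (τ • ee) ≤ ρ 0 (t₁ • ee))
    (ht₁0 : 0 ≤ t₁) (ht₁1 : t₁ ≤ 1) :
    ∀ t, 2/6 ≤ t → t ≤ 3/6 → 0 ≤ (FF ρ t₁ (0,t)).im := by
  intro t h0 h1
  obtain ⟨ha, hb, hc⟩ := stage3 (t₁ := t₁) h0 h1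
  rw [FF_im, XX_zero, YY_zero, ZZ_zero, ha, hb, hc, zero_smul]
  have h2 : ρ (t₁ • ee) (0 : EE) = ρ 0 (t₁ • ee) := hsym _ _
  have h3 : ρ 0 ((t₁*(6*t-2)) • ee) ≤ ρ 0 (t₁ • ee) :=
    hmax _ (mul_nonneg ht₁0 (by linarith)) (mul_le_one₀ ht₁1 (by linarith) (by linarith))
  linarith

lemma sign4 (hsym : ∀ x y, ρ x y = ρ y x)
    (hmax : ∀ τ : ℝ, 0 ≤ τ → τ ≤ 1 → ρ 0 (τ • ee) ≤ ρ 0 (t₁ • ee))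
    (ht₁0 : 0 ≤ t₁) (ht₁1 : t₁ ≤ 1) :
    ∀ t, 3/6 ≤ t → t ≤ 4/6 → (FF ρ t₁ (0,t)).im ≤ 0 := by
  intro t h0 h1
  obtain ⟨ha, hb, hc⟩ := stage4 (t₁ := t₁) h0 h1
  rw [FF_im, XX_zero, YY_zero, ZZ_zero, ha, hb, hc, zero_smul]
  have h2 : ρ ((t₁*(4-6*t)) • ee) (0 : EE) = ρ 0 ((t₁*(4-6*t)) • ee) := hsym _ _
  have h3 : ρ 0 ((t₁*(4-6*t)) • ee) ≤ ρ 0 (t₁ • ee) :=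
    hmax _ (mul_nonneg ht₁0 (by linarith)) (mul_le_one₀ ht₁1 (by linarith) (by linarith))
  linarith

lemma sign5 (hsym : ∀ x y, ρ x y = ρ y x)
    (hmax : ∀ τ : ℝ, 0 ≤ τ → τ ≤ 1 → ρ 0 (τ • ee) ≤ ρ 0 (t₁ • ee))
    (ht₁0 : 0 ≤ t₁) (ht₁1 : t₁ ≤ 1) :
    ∀ t, 4/6 ≤ t → t ≤ 5/6 → 0 ≤ (FF ρ t₁ (0,t)).re := by
  intro t h0 h1
  obtain ⟨ha, hb, hc⟩ := stage5 (t₁ := t₁) h0 h1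
  rw [FF_re, XX_zero, YY_zero, ZZ_zero, ha, hb, hc, zero_smul]
  have h2 : ρ (t₁ • ee) (0 : EE) = ρ 0 (t₁ • ee) := hsym _ _
  have h3 : ρ 0 ((t₁*(6*t-4)) • ee) ≤ ρ 0 (t₁ • ee) :=
    hmax _ (mul_nonneg ht₁0 (by linarith)) (mul_le_one₀ ht₁1 (by linarith) (by linarith))
  linarith

lemma sign6 (hsym : ∀ x y, ρ x y = ρ y x)
    (hmax : ∀ τ : ℝ, 0 ≤ τ → τ ≤ 1 → ρ 0 (τ • ee) ≤ ρ 0 (t₁ • ee))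
    (ht₁0 : 0 ≤ t₁) (ht₁1 : t₁ ≤ 1) :
    ∀ t, 5/6 ≤ t → t ≤ 1 → (FF ρ t₁ (0,t)).re ≤ 0 := by
  intro t h0 h1
  obtain ⟨ha, hb, hc⟩ := stage6 (t₁ := t₁) h0 h1
  rw [FF_re, XX_zero, YY_zero, ZZ_zero, ha, hb, hc, zero_smul]
  have h2 : ρ ((t₁*(6-6*t)) • ee) (0 : EE) = ρ 0 ((t₁*(6-6*t)) • ee) := hsym _ _
  have h3 : ρ 0 ((t₁*(6-6*t)) • ee) ≤ ρ 0 (t₁ • ee) :=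
    hmax _ (mul_nonneg ht₁0 (by linarith)) (mul_le_one₀ ht₁1 (by linarith) (by linarith))
  linarith

end signs

section juncs

variable {ρ : EE → EE → ℝ} {t₁ : ℝ}

lemma junc0 (hsym : ∀ x y, ρ x y = ρ y x) (heq0 : ∀ x y, ρ x y = 0 ↔ x = y) :
    (FF ρ t₁ (0, 0)).re = -(ρ 0 (t₁ • ee)) ∧ (FF ρ t₁ (0, 0)).im = 0 := by
  obtain ⟨ha, hb, hc⟩ := stage1 (t₁ := t₁) (t := 0) (by norm_num) (by norm_num)
  have hb' : fb t₁ 0 = 0 := by rw [hb]; ring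
  rw [FF_re, FF_im, XX_zero, YY_zero, ZZ_zero, ha, hb', hc, zero_smul]
  have h00 : ρ (0 : EE) 0 = 0 := (heq0 0 0).2 rfl
  have hqq : ρ (t₁ • ee) (t₁ • ee) = 0 := (heq0 _ _).2 rfl
  have h2 : ρ (t₁ • ee) (0 : EE) = ρ 0 (t₁ • ee) := hsym _ _
  constructor <;> (simp only [h00, hqq, h2]; ring)

lemma junc1 (hsym : ∀ x y, ρ x y = ρ y x) (heq0 : ∀ x y, ρ x y = 0 ↔ x = y) :
    (FF ρ t₁ (0, 1/6)).re = ρ 0 (t₁ • ee) ∧ (FF ρ t₁ (0, 1/6)).im = -(ρ 0 (t₁ • ee)) := by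
  obtain ⟨ha, hb, hc⟩ := stage1 (t₁ := t₁) (t := 1/6) (by norm_num) (by norm_num)
  have hb' : fb t₁ (1/6) = t₁ := by rw [hb]; ring
  rw [FF_re, FF_im, XX_zero, YY_zero, ZZ_zero, ha, hb', hc, zero_smul]
  have h00 : ρ (0 : EE) 0 = 0 := (heq0 0 0).2 rfl
  have hqq : ρ (t₁ • ee) (t₁ • ee) = 0 := (heq0 _ _).2 rfl
  have h2 : ρ (t₁ • ee) (0 : EE) = ρ 0 (t₁ • ee) := hsym _ _
  constructor <;> (simp only [h00, hqq, h2]; ring)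

lemma junc2 (hsym : ∀ x y, ρ x y = ρ y x) (heq0 : ∀ x y, ρ x y = 0 ↔ x = y) :
    (FF ρ t₁ (0, 2/6)).re = 0 ∧ (FF ρ t₁ (0, 2/6)).im = ρ 0 (t₁ • ee) := by
  obtain ⟨ha, hb, hc⟩ := stage2 (t₁ := t₁) (t := 2/6) (by norm_num) (by norm_num)
  have hc' : fc t₁ (2/6) = 0 := by rw [hc]; ring
  rw [FF_re, FF_im, XX_zero, YY_zero, ZZ_zero, ha, hb, hc', zero_smul]
  have h00 : ρ (0 : EE) 0 = 0 := (heq0 0 0).2 rfl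
  have hqq : ρ (t₁ • ee) (t₁ • ee) = 0 := (heq0 _ _).2 rfl
  have h2 : ρ (t₁ • ee) (0 : EE) = ρ 0 (t₁ • ee) := hsym _ _
  constructor <;> (simp only [h00, hqq, h2]; ring)

lemma junc3 (hsym : ∀ x y, ρ x y = ρ y x) (heq0 : ∀ x y, ρ x y = 0 ↔ x = y) :
    (FF ρ t₁ (0, 3/6)).re = -(ρ 0 (t₁ • ee)) ∧ (FF ρ t₁ (0, 3/6)).im = 0 := by
  obtain ⟨ha, hb, hc⟩ := stage3 (t₁ := t₁) (t := 3/6) (by norm_num) (by norm_num)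
  have ha' : fa t₁ (3/6) = t₁ := by rw [ha]; ring
  rw [FF_re, FF_im, XX_zero, YY_zero, ZZ_zero, ha', hb, hc, zero_smul]
  have h00 : ρ (0 : EE) 0 = 0 := (heq0 0 0).2 rfl
  have hqq : ρ (t₁ • ee) (t₁ • ee) = 0 := (heq0 _ _).2 rfl
  have h2 : ρ (t₁ • ee) (0 : EE) = ρ 0 (t₁ • ee) := hsym _ _
  constructor <;> (simp only [h00, hqq, h2]; ring)

lemma junc4 (hsym : ∀ x y, ρ x y = ρ y x) (heq0 : ∀ x y, ρ x y = 0 ↔ x = y) :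
    (FF ρ t₁ (0, 4/6)).re = ρ 0 (t₁ • ee) ∧ (FF ρ t₁ (0, 4/6)).im = -(ρ 0 (t₁ • ee)) := by
  obtain ⟨ha, hb, hc⟩ := stage4 (t₁ := t₁) (t := 4/6) (by norm_num) (by norm_num)
  have hb' : fb t₁ (4/6) = 0 := by rw [hb]; ring
  rw [FF_re, FF_im, XX_zero, YY_zero, ZZ_zero, ha, hb', hc, zero_smul]
  have h00 : ρ (0 : EE) 0 = 0 := (heq0 0 0).2 rfl
  have hqq : ρ (t₁ • ee) (t₁ • ee) = 0 := (heq0 _ _).2 rfl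
  have h2 : ρ (t₁ • ee) (0 : EE) = ρ 0 (t₁ • ee) := hsym _ _
  constructor <;> (simp only [h00, hqq, h2]; ring)

lemma junc5 (hsym : ∀ x y, ρ x y = ρ y x) (heq0 : ∀ x y, ρ x y = 0 ↔ x = y) :
    (FF ρ t₁ (0, 5/6)).re = 0 ∧ (FF ρ t₁ (0, 5/6)).im = ρ 0 (t₁ • ee) := by
  obtain ⟨ha, hb, hc⟩ := stage5 (t₁ := t₁) (t := 5/6) (by norm_num) (by norm_num)
  have hc' : fc t₁ (5/6) = t₁ := by rw [hc]; ring
  rw [FF_re, FF_im, XX_zero, YY_zero, ZZ_zero, ha, hb, hc', zero_smul]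
  have h00 : ρ (0 : EE) 0 = 0 := (heq0 0 0).2 rfl
  have hqq : ρ (t₁ • ee) (t₁ • ee) = 0 := (heq0 _ _).2 rfl
  have h2 : ρ (t₁ • ee) (0 : EE) = ρ 0 (t₁ • ee) := hsym _ _
  constructor <;> (simp only [h00, hqq, h2]; ring)

lemma junc6 (hsym : ∀ x y, ρ x y = ρ y x) (heq0 : ∀ x y, ρ x y = 0 ↔ x = y) :
    (FF ρ t₁ (0, 1)).re = -(ρ 0 (t₁ • ee)) ∧ (FF ρ t₁ (0, 1)).im = 0 := by
  obtain ⟨ha, hb, hc⟩ := stage6 (t₁ := t₁) (t := 1) (by norm_num) (by norm_num)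
  have ha' : fa t₁ 1 = 0 := by rw [ha]; ring
  rw [FF_re, FF_im, XX_zero, YY_zero, ZZ_zero, ha', hb, hc, zero_smul]
  have h00 : ρ (0 : EE) 0 = 0 := (heq0 0 0).2 rfl
  have hqq : ρ (t₁ • ee) (t₁ • ee) = 0 := (heq0 _ _).2 rfl
  have h2 : ρ (t₁ • ee) (0 : EE) = ρ 0 (t₁ • ee) := hsym _ _
  constructor <;> (simp only [h00, hqq, h2]; ring)

end juncs

end BorsukAux

open BorsukAux Real Set

/-- `ρ` is a metric on `E` that induces the (given) standard topology of `E`. -/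
def IsMetricEquivToStd {E : Type*} [TopologicalSpace E] (ρ : E → E → ℝ) : Prop :=
  (∀ x y, ρ x y = ρ y x) ∧
  (∀ x y, ρ x y = 0 ↔ x = y) ∧
  (∀ x y z, ρ x z ≤ ρ x y + ρ y z) ∧
  (∀ s : Set E, IsOpen s ↔ ∀ x ∈ s, ∃ ε > 0, {y | ρ x y < ε} ⊆ s)

set_option maxHeartbeats 4000000 in
/-- For every metric `ρ` on `ℝ²` equivalent to the Euclidean metric there is a
`ρ`-equilateral set of size 3 (hence the Borsuk number of `ℝ²` is 3). -/
theorem exists_equilateral_triple_R2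
    (ρ : EuclideanSpace ℝ (Fin 2) → EuclideanSpace ℝ (Fin 2) → ℝ)
    (hρ : IsMetricEquivToStd ρ) :
    ∃ x₀ x₁ x₂ : EuclideanSpace ℝ (Fin 2),
      x₀ ≠ x₁ ∧ x₁ ≠ x₂ ∧ x₂ ≠ x₀ ∧
      ρ x₀ x₁ = ρ x₁ x₂ ∧ ρ x₁ x₂ = ρ x₂ x₀ := by
  classical
  obtain ⟨hsym, heq0, htri, htop⟩ := hρ
  by_contra hcon
  push_neg at hcon
  have hrefl : ∀ x : EE, ρ x x = 0 := fun x => (heq0 x x).2 rfl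
  have hnonneg : ∀ x y : EE, 0 ≤ ρ x y := by
    intro x y
    have h := htri x y x
    rw [hrefl] at h
    have h2 := hsym y x
    linarith
  have hne : ∀ x y z : EE, ρ x y = ρ y z → ρ y z = ρ z x → x = y ∧ y = z := by
    intro x y z h1 h2
    by_cases hxy : x = y
    · subst hxy
      rw [hrefl] at h1
      exact ⟨rfl, (heq0 x z).1 h1.symm⟩
    · exfalso
      have hyz : y ≠ z := by
        intro h; subst h
        rw [hrefl] at h1
        exact hxy ((heq0 x y).1 h1)
      have hzx : z ≠ x := by
        intro h; subst h
        rw [hrefl] at h2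
        exact hxy ((heq0 y z).1 h2).symm
      exact hcon x y z hxy hyz hzx h1 h2
  have hball : ∀ (x : EE) (ε : ℝ), IsOpen {y | ρ x y < ε} := by
    intro x ε
    rw [htop]
    intro z hz
    simp only [mem_setOf_eq] at hz
    refine ⟨ε - ρ x z, by linarith, ?_⟩
    intro y hy
    simp only [mem_setOf_eq] at hy ⊢
    have h := htri x z y
    linarith
  have hcont : Continuous fun q : EE × EE => ρ q.1 q.2 := by
    rw [continuous_iff_continuousAt]
    rintro ⟨x, y⟩
    rw [ContinuousAt, Metric.tendsto_nhds]
    intro ε hε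
    have hU : IsOpen ({a | ρ x a < ε/2} ×ˢ {b | ρ y b < ε/2} : Set (EE × EE)) :=
      (hball x (ε/2)).prod (hball y (ε/2))
    have hmem : (x, y) ∈ ({a | ρ x a < ε/2} ×ˢ {b | ρ y b < ε/2} : Set (EE × EE)) := by
      constructor <;> simp [hrefl, half_pos hε]
    filter_upwards [hU.mem_nhds hmem] with q hq
    obtain ⟨h1, h2⟩ := hq
    simp only [mem_setOf_eq] at h1 h2
    rw [Real.dist_eq, abs_lt]
    have ha := htri q.1 x q.2
    have hb := htri x y q.2
    have hc := htri x q.1 y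
    have hd := htri q.1 q.2 y
    have hsa := hsym x q.1
    have hsb := hsym y q.2
    have hsc := hsym q.2 y
    constructor <;> linarith
  -- the maximum of ρ 0 (τ • ee) on [0,1]
  have hAcont : Continuous fun τ : ℝ => ρ 0 (τ • ee) :=
    hcont.comp (continuous_const.prodMk (continuous_id.smul continuous_const))
  obtain ⟨t₁, ht₁mem, hmaxOn⟩ :=
    isCompact_Icc.exists_isMaxOn (nonempty_Icc.2 zero_le_one) hAcont.continuousOn
  set s := ρ 0 (t₁ • ee) with hs_def
  have hmax : ∀ τ : ℝ, 0 ≤ τ → τ ≤ 1 → ρ 0 (τ • ee) ≤ s := fun τ h0 h1 => hmaxOn ⟨h0, h1⟩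
  have hs1 : ρ 0 ((1:ℝ) • ee) ≠ 0 := by
    intro h
    have := ((heq0 _ _).1 h).symm
    rw [one_smul] at this
    exact ee_ne this
  have hspos : 0 < s :=
    lt_of_lt_of_le (lt_of_le_of_ne (hnonneg _ _) (Ne.symm hs1)) (hmax 1 zero_le_one le_rfl)
  have ht₁0 : 0 ≤ t₁ := ht₁mem.1
  have ht₁1 : t₁ ≤ 1 := ht₁mem.2
  have ht₁pos : 0 < t₁ := by
    rcases eq_or_lt_of_le ht₁0 with h | h
    · exfalso
      have : s = 0 := by rw [hs_def, ← h, zero_smul, hrefl]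
      linarith
    · exact h
  -- the loop map and its basic properties
  set F := FF ρ t₁ with hF_def
  have hFcont : Continuous F := FF_cont hcont t₁
  set K : Set (ℝ × ℝ) := Icc (0:ℝ) 1 ×ˢ Icc (0:ℝ) 1 with hK_def
  have hKcomp : IsCompact K := isCompact_Icc.prod isCompact_Icc
  have hKne : K.Nonempty := ⟨(0,0), ⟨⟨le_rfl, zero_le_one⟩, ⟨le_rfl, zero_le_one⟩⟩⟩
  have hFne : ∀ p ∈ K, F p ≠ 0 := by
    rintro ⟨u, t⟩ hp hzero
    obtain ⟨hu, ht⟩ := hp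
    have hre : (F (u,t)).re = 0 := by rw [hzero]; rfl
    have him : (F (u,t)).im = 0 := by rw [hzero]; rfl
    rw [hF_def, FF_re] at hre
    rw [hF_def, FF_im] at him
    have h1 : ρ (XX t₁ (u,t)) (YY t₁ (u,t)) = ρ (YY t₁ (u,t)) (ZZ t₁ (u,t)) := by linarith
    have h2 : ρ (YY t₁ (u,t)) (ZZ t₁ (u,t)) = ρ (ZZ t₁ (u,t)) (XX t₁ (u,t)) := by linarith
    obtain ⟨hXY, hYZ⟩ := hne _ _ _ h1 h2
    have hu0 : u = 0 := by
      have hc1 : XX t₁ (u,t) 1 = YY t₁ (u,t) 1 := by rw [hXY]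
      rw [(XX_coord t₁ (u,t)).2, (YY_coord t₁ (u,t)).2] at hc1
      exact hc1
    have hab : fa t₁ t = fb t₁ t := by
      have hc0 : XX t₁ (u,t) 0 = YY t₁ (u,t) 0 := by rw [hXY]
      rw [(XX_coord t₁ (u,t)).1, (YY_coord t₁ (u,t)).1, hu0] at hc0
      simpa using hc0
    have hbc : fb t₁ t = fc t₁ t := by
      have hc0 : YY t₁ (u,t) 0 = ZZ t₁ (u,t) 0 := by rw [hYZ]
      rw [(YY_coord t₁ (u,t)).1, (ZZ_coord t₁ (u,t)).1, hu0] at hc0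
      simpa using hc0
    exact fabc_ne ht₁pos ht.1 ht.2 ⟨hab, hbc⟩
  -- minimum modulus and uniform continuity
  obtain ⟨pmin, hpmin, hminOn⟩ := hKcomp.exists_isMinOn hKne hFcont.norm.continuousOn
  set m := ‖F pmin‖ with hm_def
  have hmpos : 0 < m := norm_pos_iff.2 (hFne pmin hpmin)
  have hmle : ∀ p ∈ K, m ≤ ‖F p‖ := fun p hp => hminOn hp
  have hUC := hKcomp.uniformContinuousOn_of_continuous hFcont.continuousOn
  rw [Metric.uniformContinuousOn_iff] at hUC
  obtain ⟨δ, hδpos, hδ⟩ := hUC m hmpos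
  obtain ⟨N, hNgt⟩ := exists_nat_gt (1/δ)
  have hNpos : 0 < (N:ℝ) := lt_trans (by positivity) hNgt
  have hstep : (1:ℝ)/N < δ := by
    rw [div_lt_iff₀ hNpos]
    have := (div_lt_iff₀ hδpos).1 hNgt
    linarith
  have hratio : ∀ u ∈ Icc (0:ℝ) 1, ∀ t t' : ℝ, t ∈ Icc (0:ℝ) 1 → t' ∈ Icc (0:ℝ) 1 →
      |t' - t| ≤ 1/N →
      F (u, t') / F (u, t) ∈ Complex.slitPlane ∧ F (u,t) ≠ 0 ∧ F (u,t') ≠ 0 := by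
    intro u hu t t' ht ht' hd
    have hp : (u,t) ∈ K := ⟨hu, ht⟩
    have hp' : (u,t') ∈ K := ⟨hu, ht'⟩
    have hne1 := hFne _ hp
    have hne2 := hFne _ hp'
    have hdist : dist ((u,t') : ℝ×ℝ) (u,t) < δ := by
      rw [Prod.dist_eq]
      apply max_lt
      · simpa [Real.dist_eq] using hδpos
      · rw [Real.dist_eq]; exact lt_of_le_of_lt hd hstep
    have hFd : dist (F (u,t')) (F (u,t)) < m := hδ _ hp' _ hp hdist
    rw [dist_eq_norm] at hFd
    exact ⟨ratio_slit hne1 (lt_of_lt_of_le hFd (hmle _ hp)), hne1, hne2⟩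
  have hnode_mem : ∀ k : ℕ, k ≤ N → ((k:ℝ)/N) ∈ Icc (0:ℝ) 1 := by
    intro k hk
    constructor
    · positivity
    · rw [div_le_one hNpos]; exact_mod_cast hk
  -- the partial node points
  set tk : ℕ → ℝ → ℝ := fun k t => max ((k:ℝ)/N) (min t (((k:ℝ)+1)/N)) with htk_def
  have htk_lb : ∀ (k : ℕ) (t : ℝ), ((k:ℝ)/N) ≤ tk k t := fun k t => le_max_left _ _
  have htk_ub : ∀ (k : ℕ) (t : ℝ), tk k t ≤ ((k:ℝ)+1)/N := by
    intro k t
    apply max_le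
    · exact (div_le_div_iff_of_pos_right hNpos).2 (by linarith)
    · exact min_le_right _ _
  have htk_mem : ∀ (k : ℕ), k < N → ∀ t : ℝ, tk k t ∈ Icc (0:ℝ) 1 := by
    intro k hk t
    constructor
    · exact le_trans (hnode_mem k (le_of_lt hk)).1 (htk_lb k t)
    · refine le_trans (htk_ub k t) ?_
      have : ((k:ℝ)+1) = ((k+1 : ℕ) : ℝ) := by push_cast; ring
      rw [this]
      exact (hnode_mem (k+1) hk).2
  have htk_close : ∀ (k : ℕ) (t : ℝ), |tk k t - (k:ℝ)/N| ≤ 1/N := by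
    intro k t
    rw [abs_le]
    have h1 := htk_lb k t
    have h2 := htk_ub k t
    have h3 : ((k:ℝ)+1)/N = (k:ℝ)/N + 1/N := by ring
    constructor <;> [linarith [hNpos]; linarith [h3 ▸ h2]]
  -- telescoping identity
  have hKEY : ∀ u ∈ Icc (0:ℝ) 1, ∀ t ∈ Icc (0:ℝ) 1, ∀ j : ℕ, j ≤ N →
      Complex.exp (∑ k ∈ Finset.range j, Complex.log (F (u, tk k t) / F (u, (k:ℝ)/N)))
        = F (u, min t ((j:ℝ)/N)) / F (u, 0) := by
    intro u hu t ht j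
    have h0mem : (0:ℝ) ∈ Icc (0:ℝ) 1 := ⟨le_rfl, zero_le_one⟩
    have hF0 : F (u, 0) ≠ 0 := hFne _ ⟨hu, h0mem⟩
    induction j with
    | zero =>
      intro _
      simp only [Finset.range_zero, Finset.sum_empty, Complex.exp_zero, Nat.cast_zero,
        zero_div]
      rw [min_eq_right ht.1, div_self hF0]
    | succ j ih =>
      intro hj
      have hjlt : j < N := Nat.lt_of_succ_le hj
      have hjN : j ≤ N := le_of_lt hjlt
      have hmemj : ((j:ℝ)/N) ∈ Icc (0:ℝ) 1 := hnode_mem j hjN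
      have hmemtk : tk j t ∈ Icc (0:ℝ) 1 := htk_mem j hjlt t
      have hFj : F (u, (j:ℝ)/N) ≠ 0 := hFne _ ⟨hu, hmemj⟩
      have hFtk : F (u, tk j t) ≠ 0 := hFne _ ⟨hu, hmemtk⟩
      rw [Finset.sum_range_succ, Complex.exp_add, ih hjN,
        Complex.exp_log (div_ne_zero hFtk hFj)]
      have hcast : (((j+1 : ℕ)):ℝ) = (j:ℝ) + 1 := by push_cast; ring
      rw [hcast]
      have hsteple : ((j:ℝ))/N ≤ ((j:ℝ)+1)/N := (div_le_div_iff_of_pos_right hNpos).2 (by linarith)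
      rcases le_total t ((j:ℝ)/N) with hle | hle
      · have h1 : min t ((j:ℝ)/N) = t := min_eq_left hle
        have h2 : min t (((j:ℝ)+1)/N) = t := min_eq_left (le_trans hle hsteple)
        have htkj : tk j t = (j:ℝ)/N := by
          show max ((j:ℝ)/N) (min t (((j:ℝ)+1)/N)) = (j:ℝ)/N
          rw [min_eq_left (le_trans hle hsteple), max_eq_left hle]
        rw [htkj, h1, h2, div_self hFj, mul_one]
      · have h1 : min t ((j:ℝ)/N) = (j:ℝ)/N := min_eq_right hle
        have htkj : tk j t = min t (((j:ℝ)+1)/N) := by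
          show max ((j:ℝ)/N) (min t (((j:ℝ)+1)/N)) = min t (((j:ℝ)+1)/N)
          exact max_eq_right (le_min hle hsteple)
        rw [h1, htkj]
        field_simp
  have h0mem : (0:ℝ) ∈ Icc (0:ℝ) 1 := ⟨le_rfl, zero_le_one⟩
  have h1mem : (1:ℝ) ∈ Icc (0:ℝ) 1 := ⟨zero_le_one, le_rfl⟩
  have hF00 : F (0,0) ≠ 0 := hFne _ ⟨h0mem, h0mem⟩
  -- the lift along the bottom edge
  set lift : ℝ → ℂ := fun t =>
    Complex.log (F (0,0)) + ∑ k ∈ Finset.range N, Complex.log (F (0, tk k t) / F (0, (k:ℝ)/N))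
    with hlift_def
  have hexplift : ∀ t ∈ Icc (0:ℝ) 1, Complex.exp (lift t) = F (0, t) := by
    intro t ht
    rw [hlift_def]
    simp only []
    rw [Complex.exp_add, Complex.exp_log hF00, hKEY 0 h0mem t ht N le_rfl]
    rw [div_self (ne_of_gt hNpos), min_eq_left ht.2, mul_comm,
      div_mul_cancel₀ _ hF00]
  have hliftcont : Continuous lift := by
    rw [hlift_def]
    apply continuous_const.add
    apply continuous_finset_sum
    intro k hk
    have hklt : k < N := Finset.mem_range.1 hk
    have hG : Continuous fun t : ℝ => F (0, tk k t) / F (0, (k:ℝ)/N) := by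
      apply Continuous.div_const
      apply hFcont.comp
      apply continuous_const.prodMk
      exact continuous_const.max (continuous_id.min continuous_const)
    rw [continuous_iff_continuousAt]
    intro t
    have hslit : F (0, tk k t) / F (0, (k:ℝ)/N) ∈ Complex.slitPlane :=
      (hratio 0 h0mem _ _ (hnode_mem k (le_of_lt hklt)) (htk_mem k hklt t)
        (htk_close k t)).1
    exact hG.continuousAt.clog hslit
  set g : ℝ → ℝ := fun t => (lift t).im with hg_def
  have hgcont : Continuous g := Complex.continuous_im.comp hliftcont
  have hFg : ∀ t ∈ Icc (0:ℝ) 1,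
      (F (0,t)).re = Real.exp ((lift t).re) * Real.cos (g t) ∧
      (F (0,t)).im = Real.exp ((lift t).re) * Real.sin (g t) := by
    intro t ht
    have h := hexplift t ht
    constructor
    · rw [← h, Complex.exp_re]
    · rw [← h, Complex.exp_im]
  -- value of the lift at 0
  have hF00val : F (0,0) = ((-s : ℝ) : ℂ) := by
    have hj := junc0 (ρ := ρ) (t₁ := t₁) hsym heq0
    apply Complex.ext
    · rw [← hF_def] at hj; rw [hj.1]; simp [hs_def]
    · rw [← hF_def] at hj; rw [hj.2]; simp
  have hg0 : g 0 = π := by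
    have hzero : ∀ k ∈ Finset.range N, Complex.log (F (0, tk k 0) / F (0, (k:ℝ)/N)) = 0 := by
      intro k hk
      have hklt : k < N := Finset.mem_range.1 hk
      have htk0 : tk k 0 = (k:ℝ)/N := by
        show max ((k:ℝ)/N) (min 0 (((k:ℝ)+1)/N)) = (k:ℝ)/N
        rw [min_eq_left (by positivity), max_eq_left (by positivity)]
      rw [htk0, div_self (hFne _ ⟨h0mem, hnode_mem k (le_of_lt hklt)⟩), Complex.log_one]
    have hlift0 : lift 0 = Complex.log (F (0,0)) := by
      rw [hlift_def]
      simp only []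
      rw [Finset.sum_eq_zero hzero, add_zero]
    show (lift 0).im = π
    rw [hlift0, hF00val, Complex.log_im, Complex.arg_ofReal_of_neg (by linarith)]
  have hπ : (0:ℝ) < π := Real.pi_pos
  have hexpne : ∀ t : ℝ, (0:ℝ) < Real.exp ((lift t).re) := fun t => Real.exp_pos _
  have hsqrt2 : (0:ℝ) < Real.sqrt 2 := Real.sqrt_pos.2 (by norm_num)
  -- stage 1 : bad = π/4
  have hbad1 : ∀ t ∈ Icc (0:ℝ) (1/6), ∀ k : ℤ, g t ≠ π/4 + 2*π*k := by
    intro t ht k heq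
    have htI : t ∈ Icc (0:ℝ) 1 := ⟨ht.1, by linarith [ht.2]⟩
    have hsgn := sign1 (ρ := ρ) hsym hmax ht₁0 ht₁1 t ht.1 ht.2
    rw [← hF_def] at hsgn
    obtain ⟨hre, him⟩ := hFg t htI
    rw [hre, him, heq,
      show π/4 + 2*π*(k:ℝ) = π/4 + (k:ℝ)*(2*π) by ring,
      Real.cos_add_int_mul_two_pi, Real.sin_add_int_mul_two_pi,
      Real.cos_pi_div_four, Real.sin_pi_div_four] at hsgn
    nlinarith [hexpne t]
  have hw1 := window (by norm_num : (0:ℝ) ≤ 1/6) hgcont.continuousOn hbad1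
    (by rw [hg0]; linarith) (by rw [hg0]; linarith)
  have hg16 : g (1/6) = 7*π/4 := by
    have h16I : (1/6:ℝ) ∈ Icc (0:ℝ) 1 := by constructor <;> norm_num
    obtain ⟨hre, him⟩ := hFg (1/6) h16I
    have hj := junc1 (ρ := ρ) (t₁ := t₁) hsym heq0
    rw [← hF_def, ← hs_def] at hj
    have hcong := typeB hspos (by rw [← hre]; exact hj.1) (by rw [← him]; exact hj.2)
    have hwin := hw1 (1/6) ⟨by norm_num, le_rfl⟩
    exact pin hcong ⟨1, by push_cast; ring⟩ hwin.1 hwin.2 (by linarith) (by linarith)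
  -- stage 2 : bad = 5π/4
  have hbad2 : ∀ t ∈ Icc (1/6:ℝ) (2/6), ∀ k : ℤ, g t ≠ 5*π/4 + 2*π*k := by
    intro t ht k heq
    have htI : t ∈ Icc (0:ℝ) 1 := ⟨by linarith [ht.1], by linarith [ht.2]⟩
    have hsgn := sign2 (ρ := ρ) hsym hmax ht₁0 ht₁1 t ht.1 ht.2
    rw [← hF_def] at hsgn
    obtain ⟨hre, him⟩ := hFg t htI
    rw [hre, him, heq,
      show 5*π/4 + 2*π*(k:ℝ) = (π/4 + π) + (k:ℝ)*(2*π) by ring,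
      Real.cos_add_int_mul_two_pi, Real.sin_add_int_mul_two_pi,
      Real.cos_add_pi, Real.sin_add_pi,
      Real.cos_pi_div_four, Real.sin_pi_div_four] at hsgn
    nlinarith [hexpne t]
  have hw2 := window (by norm_num : (1/6:ℝ) ≤ 2/6) hgcont.continuousOn hbad2
    (by rw [hg16]; linarith) (by rw [hg16]; linarith)
  have hg26 : g (2/6) = 5*π/2 := by
    have h26I : (2/6:ℝ) ∈ Icc (0:ℝ) 1 := by constructor <;> norm_num
    obtain ⟨hre, him⟩ := hFg (2/6) h26I
    have hj := junc2 (ρ := ρ) (t₁ := t₁) hsym heq0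
    rw [← hF_def, ← hs_def] at hj
    have hcong := typeC hspos (by rw [← hre]; exact hj.1) (by rw [← him]; exact hj.2)
    have hwin := hw2 (2/6) ⟨by norm_num, le_rfl⟩
    exact pin hcong ⟨1, by push_cast; ring⟩ hwin.1 hwin.2 (by linarith) (by linarith)
  -- stage 3 : bad = 3π/2
  have hbad3 : ∀ t ∈ Icc (2/6:ℝ) (3/6), ∀ k : ℤ, g t ≠ 3*π/2 + 2*π*k := by
    intro t ht k heq
    have htI : t ∈ Icc (0:ℝ) 1 := ⟨by linarith [ht.1], by linarith [ht.2]⟩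
    have hsgn := sign3 (ρ := ρ) hsym hmax ht₁0 ht₁1 t ht.1 ht.2
    rw [← hF_def] at hsgn
    obtain ⟨hre, him⟩ := hFg t htI
    rw [him, heq,
      show 3*π/2 + 2*π*(k:ℝ) = (π + π/2) + (k:ℝ)*(2*π) by ring,
      Real.sin_add_int_mul_two_pi] at hsgn
    rw [show (π + π/2 : ℝ) = π/2 + π by ring, Real.sin_add_pi, Real.sin_pi_div_two] at hsgn
    nlinarith [hexpne t]
  have hw3 := window (by norm_num : (2/6:ℝ) ≤ 3/6) hgcont.continuousOn hbad3
    (by rw [hg26]; linarith) (by rw [hg26]; linarith)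
  have hg36 : g (3/6) = 3*π := by
    have h36I : (3/6:ℝ) ∈ Icc (0:ℝ) 1 := by constructor <;> norm_num
    obtain ⟨hre, him⟩ := hFg (3/6) h36I
    have hj := junc3 (ρ := ρ) (t₁ := t₁) hsym heq0
    rw [← hF_def, ← hs_def] at hj
    have hcong := typeA hspos (by rw [← hre]; exact hj.1) (by rw [← him]; exact hj.2)
    have hwin := hw3 (3/6) ⟨by norm_num, le_rfl⟩
    exact pin hcong ⟨1, by push_cast; ring⟩ hwin.1 hwin.2 (by linarith) (by linarith)
  -- stage 4 : bad = 5π/2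
  have hbad4 : ∀ t ∈ Icc (3/6:ℝ) (4/6), ∀ k : ℤ, g t ≠ 5*π/2 + 2*π*k := by
    intro t ht k heq
    have htI : t ∈ Icc (0:ℝ) 1 := ⟨by linarith [ht.1], by linarith [ht.2]⟩
    have hsgn := sign4 (ρ := ρ) hsym hmax ht₁0 ht₁1 t ht.1 ht.2
    rw [← hF_def] at hsgn
    obtain ⟨hre, him⟩ := hFg t htI
    rw [him, heq,
      show 5*π/2 + 2*π*(k:ℝ) = π/2 + ((k:ℝ)+1)*(2*π) by ring] at hsgn
    rw [show ((k:ℝ)+1)*(2*π) = ((k+1 : ℤ):ℝ)*(2*π) by push_cast; ring,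
      Real.sin_add_int_mul_two_pi, Real.sin_pi_div_two] at hsgn
    nlinarith [hexpne t]
  have hw4 := window (by norm_num : (3/6:ℝ) ≤ 4/6) hgcont.continuousOn hbad4
    (by rw [hg36]; linarith) (by rw [hg36]; linarith)
  have hg46 : g (4/6) = 15*π/4 := by
    have h46I : (4/6:ℝ) ∈ Icc (0:ℝ) 1 := by constructor <;> norm_num
    obtain ⟨hre, him⟩ := hFg (4/6) h46I
    have hj := junc4 (ρ := ρ) (t₁ := t₁) hsym heq0
    rw [← hF_def, ← hs_def] at hj
    have hcong := typeB hspos (by rw [← hre]; exact hj.1) (by rw [← him]; exact hj.2)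
    have hwin := hw4 (4/6) ⟨by norm_num, le_rfl⟩
    exact pin hcong ⟨2, by push_cast; ring⟩ hwin.1 hwin.2 (by linarith) (by linarith)
  -- stage 5 : bad = 3π
  have hbad5 : ∀ t ∈ Icc (4/6:ℝ) (5/6), ∀ k : ℤ, g t ≠ 3*π + 2*π*k := by
    intro t ht k heq
    have htI : t ∈ Icc (0:ℝ) 1 := ⟨by linarith [ht.1], by linarith [ht.2]⟩
    have hsgn := sign5 (ρ := ρ) hsym hmax ht₁0 ht₁1 t ht.1 ht.2
    rw [← hF_def] at hsgn
    obtain ⟨hre, him⟩ := hFg t htI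
    rw [hre, heq,
      show 3*π + 2*π*(k:ℝ) = π + ((k:ℝ)+1)*(2*π) by ring] at hsgn
    rw [show ((k:ℝ)+1)*(2*π) = ((k+1 : ℤ):ℝ)*(2*π) by push_cast; ring,
      Real.cos_add_int_mul_two_pi, Real.cos_pi] at hsgn
    nlinarith [hexpne t]
  have hw5 := window (by norm_num : (4/6:ℝ) ≤ 5/6) hgcont.continuousOn hbad5
    (by rw [hg46]; linarith) (by rw [hg46]; linarith)
  have hg56 : g (5/6) = 9*π/2 := by
    have h56I : (5/6:ℝ) ∈ Icc (0:ℝ) 1 := by constructor <;> norm_num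
    obtain ⟨hre, him⟩ := hFg (5/6) h56I
    have hj := junc5 (ρ := ρ) (t₁ := t₁) hsym heq0
    rw [← hF_def, ← hs_def] at hj
    have hcong := typeC hspos (by rw [← hre]; exact hj.1) (by rw [← him]; exact hj.2)
    have hwin := hw5 (5/6) ⟨by norm_num, le_rfl⟩
    exact pin hcong ⟨2, by push_cast; ring⟩ hwin.1 hwin.2 (by linarith) (by linarith)
  -- stage 6 : bad = 4π
  have hbad6 : ∀ t ∈ Icc (5/6:ℝ) 1, ∀ k : ℤ, g t ≠ 4*π + 2*π*k := by
    intro t ht k heq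
    have htI : t ∈ Icc (0:ℝ) 1 := ⟨by linarith [ht.1], ht.2⟩
    have hsgn := sign6 (ρ := ρ) hsym hmax ht₁0 ht₁1 t ht.1 ht.2
    rw [← hF_def] at hsgn
    obtain ⟨hre, him⟩ := hFg t htI
    rw [hre, heq,
      show 4*π + 2*π*(k:ℝ) = 0 + ((k:ℝ)+2)*(2*π) by ring] at hsgn
    rw [show ((k:ℝ)+2)*(2*π) = ((k+2 : ℤ):ℝ)*(2*π) by push_cast; ring,
      Real.cos_add_int_mul_two_pi, Real.cos_zero] at hsgn
    nlinarith [hexpne t]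
  have hw6 := window (by norm_num : (5/6:ℝ) ≤ 1) hgcont.continuousOn hbad6
    (by rw [hg56]; linarith) (by rw [hg56]; linarith)
  have hg1 : g 1 = 5*π := by
    have h1I : (1:ℝ) ∈ Icc (0:ℝ) 1 := h1mem
    obtain ⟨hre, him⟩ := hFg 1 h1I
    have hj := junc6 (ρ := ρ) (t₁ := t₁) hsym heq0
    rw [← hF_def, ← hs_def] at hj
    have hcong := typeA hspos (by rw [← hre]; exact hj.1) (by rw [← him]; exact hj.2)
    have hwin := hw6 1 ⟨by norm_num, le_rfl⟩
    exact pin hcong ⟨2, by push_cast; ring⟩ hwin.1 hwin.2 (by linarith) (by linarith)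
  -- the winding sum as a function of the homotopy parameter
  set Wnd : ℝ → ℂ := fun u =>
    ∑ k ∈ Finset.range N, Complex.log (F (u, tk k 1) / F (u, (k:ℝ)/N)) with hWnd_def
  have hXYZloop : ∀ u : ℝ, XX t₁ (u,1) = XX t₁ (u,0) ∧ YY t₁ (u,1) = YY t₁ (u,0) ∧
      ZZ t₁ (u,1) = ZZ t₁ (u,0) := by
    intro u
    obtain ⟨ha, hb, hc⟩ := f_loop t₁
    refine ⟨?_, ?_, ?_⟩
    · show ((1 - u) * fa t₁ 1) • ee + u • ee' = ((1 - u) * fa t₁ 0) • ee + u • ee'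
      rw [ha]
    · show ((1 - u) * fb t₁ 1) • ee = ((1 - u) * fb t₁ 0) • ee
      rw [hb]
    · show ((1 - u) * fc t₁ 1) • ee - u • ee' = ((1 - u) * fc t₁ 0) • ee - u • ee'
      rw [hc]
  have hFloop : ∀ u : ℝ, F (u, 1) = F (u, 0) := by
    intro u
    obtain ⟨hx, hy, hz⟩ := hXYZloop u
    rw [hF_def]
    unfold FF
    rw [hx, hy, hz]
  have hexpWnd : ∀ u ∈ Icc (0:ℝ) 1, Complex.exp (Wnd u) = 1 := by
    intro u hu
    rw [hWnd_def]
    simp only []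
    rw [hKEY u hu 1 h1mem N le_rfl, div_self (ne_of_gt hNpos), min_eq_left h1mem.2,
      hFloop u, div_self (hFne _ ⟨hu, h0mem⟩)]
  have hWndint : ∀ u ∈ Icc (0:ℝ) 1, ∃ n : ℤ, Wnd u = n * (2*π*Complex.I) :=
    fun u hu => Complex.exp_eq_one_iff.1 (hexpWnd u hu)
  have hWnd0im : (Wnd 0).im = 4*π := by
    have hlift1 : lift 1 = Complex.log (F (0,0)) + Wnd 0 := by rw [hlift_def, hWnd_def]
    have him : (lift 1).im = (Complex.log (F (0,0))).im + (Wnd 0).im := by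
      rw [hlift1, Complex.add_im]
    have hlogim : (Complex.log (F (0,0))).im = π := by
      rw [hF00val, Complex.log_im, Complex.arg_ofReal_of_neg (by linarith)]
    have hgval : (lift 1).im = 5*π := hg1
    rw [hgval, hlogim] at him
    linarith
  have hFconst : ∀ x : ℝ, F (1, x) = F (1, 0) := by
    intro x
    obtain ⟨hx1, hy1, hz1⟩ := XYZ_one t₁ x
    obtain ⟨hx0, hy0, hz0⟩ := XYZ_one t₁ 0
    rw [hF_def]
    unfold FF
    rw [hx1, hy1, hz1, hx0, hy0, hz0]
  have hWnd1 : Wnd 1 = 0 := by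
    rw [hWnd_def]
    simp only []
    apply Finset.sum_eq_zero
    intro k hk
    rw [hFconst (tk k 1), hFconst ((k:ℝ)/N),
      div_self (hFne (1,0) ⟨h1mem, h0mem⟩), Complex.log_one]
  have hWndcont : ContinuousOn Wnd (Icc (0:ℝ) 1) := by
    rw [hWnd_def]
    apply continuousOn_finset_sum
    intro k hk
    have hklt : k < N := Finset.mem_range.1 hk
    intro u hu
    have hmem1 : tk k 1 ∈ Icc (0:ℝ) 1 := htk_mem k hklt 1
    have hmem2 : ((k:ℝ)/N) ∈ Icc (0:ℝ) 1 := hnode_mem k (le_of_lt hklt)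
    have hnum : ContinuousAt (fun u : ℝ => F (u, tk k 1)) u :=
      (hFcont.comp (continuous_id.prodMk continuous_const)).continuousAt
    have hden : ContinuousAt (fun u : ℝ => F (u, (k:ℝ)/N)) u :=
      (hFcont.comp (continuous_id.prodMk continuous_const)).continuousAt
    have hdenne : F (u, (k:ℝ)/N) ≠ 0 := hFne _ ⟨hu, hmem2⟩
    have hslit := (hratio u hu _ _ hmem2 hmem1 (htk_close k 1)).1
    exact ((hnum.div hden hdenne).clog hslit).continuousWithinAt
  -- intermediate value: the winding number would have to pass through π
  have hWndim_cont : ContinuousOn (fun u => (Wnd u).im) (Icc (0:ℝ) 1) :=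
    Complex.continuous_im.comp_continuousOn hWndcont
  have hmemπ : π ∈ Icc ((Wnd 1).im) ((Wnd 0).im) := by
    rw [hWnd1, hWnd0im]
    constructor
    · simp; linarith
    · linarith
  obtain ⟨u, hu, hval⟩ := intermediate_value_Icc' zero_le_one hWndim_cont hmemπ
  obtain ⟨n, hn⟩ := hWndint u hu
  have hval' : (Wnd u).im = π := hval
  rw [hn] at hval'
  have himn : ((n : ℂ) * (2*(π:ℂ)*Complex.I)).im = (n:ℝ)*(2*π) := by
    simp [Complex.mul_im]
    try ring
  rw [himn] at hval'
  have h2n : (2*n : ℤ) = 1 := by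
    have hπ0 : π ≠ 0 := ne_of_gt hπ
    have hcan : ((2*n : ℤ):ℝ) * π = 1 * π := by push_cast; linarith [hval']
    exact_mod_cast mul_right_cancel₀ hπ0 hcan
  omega
end
end

section
/- Let p be an odd prime, d, r ≥ 1, let ρ₁, …, ρᵣ be metrics on ℝᵈ inducing the standard topology, and fix t₁, …, tᵣ with each tᵢ ∈ {1, …, (p−1)/2}. If there is no ℤ/p-equivariant continuous map from the configuration space F(ℝᵈ, p) to (ℝᵖ)ʳ ∖ Δʳ, then there exist p distinct points x₀, x₁, …, x_{p−1} in ℝᵈ, indexed by 𝔽_p, such that for each i = 1, …, r the p-gon C_{tᵢ} is ρᵢ-equilateral. -/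
/-- The cyclic-shift action of the generator of `ℤ/p` on the configuration space
`F(E, p)` of `p` distinct (labelled) points of `E`. -/
def configShift {p : ℕ} {E : Type*} (x : {f : ZMod p → E // Function.Injective f}) :
    {f : ZMod p → E // Function.Injective f} :=
  ⟨fun k => x.1 (k + 1), x.2.comp (add_left_injective 1)⟩

lemma continuous_of_metric {E : Type*} [TopologicalSpace E] {ρ : E → E → ℝ}
    (h : IsMetricEquivToStd ρ) : Continuous (fun q : E × E => ρ q.1 q.2) := by
  obtain ⟨hsymm, hzero, htri, hopen⟩ := h
  have ball_open : ∀ (a : E) (ε : ℝ), IsOpen {y | ρ a y < ε} := by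
    intro a ε
    rw [hopen]
    intro x hx
    refine ⟨ε - ρ a x, by simpa using hx, fun y hy => ?_⟩
    simp only [Set.mem_setOf_eq] at *
    have := htri a x y
    linarith
  rw [continuous_iff_continuousAt]
  rintro ⟨a, b⟩
  rw [ContinuousAt, Metric.tendsto_nhds]
  intro ε hε
  have hmem : {y | ρ a y < ε / 2} ×ˢ {y | ρ b y < ε / 2} ∈ nhds (a, b) := by
    refine ((ball_open a (ε / 2)).prod (ball_open b (ε / 2))).mem_nhds ?_
    constructor <;> simp [(hzero _ _).2 rfl, hε, half_pos hε]
  filter_upwards [hmem] with q hq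
  obtain ⟨hq1, hq2⟩ := hq
  simp only [Set.mem_setOf_eq] at hq1 hq2
  have h1 := htri q.1 a q.2
  have h2 := htri a b q.2
  have h3 := htri a q.1 q.2
  have h4 := htri q.1 q.2 b
  have h5 := htri a q.1 b
  have s1 := hsymm a q.1
  have s2 := hsymm b q.2
  rw [Real.dist_eq, abs_lt]
  constructor <;> linarith

/-- If there is no `ℤ/p`-equivariant continuous map `F(ℝᵈ, p) → (ℝᵖ)ʳ ∖ Δʳ`, then
there are `p` distinct points in `ℝᵈ` such that each `p`-gon `C_{tᵢ}` is
`ρᵢ`-equilateral. -/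
theorem pgons_of_no_equivariant_map
    (p d r : ℕ) (hp : p.Prime) (hodd : Odd p) (hd : 1 ≤ d) (hr : 1 ≤ r)
    (ρ : Fin r → EuclideanSpace ℝ (Fin d) → EuclideanSpace ℝ (Fin d) → ℝ)
    (hρ : ∀ i, IsMetricEquivToStd (ρ i))
    (t : Fin r → ℕ) (ht : ∀ i, 1 ≤ t i ∧ t i ≤ (p - 1) / 2)
    (hmap : ¬ ∃ h : {f : ZMod p → EuclideanSpace ℝ (Fin d) // Function.Injective f} →
        (Fin r → ZMod p → ℝ),
      Continuous h ∧
      (∀ x, ∃ i : Fin r, ∃ k : ZMod p, h x i k ≠ h x i 0) ∧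
      (∀ x, h (configShift x) = fun i k => h x i (k + 1))) :
    ∃ x : ZMod p → EuclideanSpace ℝ (Fin d),
      Function.Injective x ∧
      ∀ i : Fin r, ∀ k : ZMod p,
        ρ i (x (k * (t i : ZMod p))) (x ((k + 1) * (t i : ZMod p))) =
          ρ i (x 0) (x (t i : ZMod p)) := by
  set h : {f : ZMod p → EuclideanSpace ℝ (Fin d) // Function.Injective f} →
      (Fin r → ZMod p → ℝ) :=
    fun x i k => ρ i (x.1 k) (x.1 (k + (t i : ZMod p))) with hh
  have hcont : Continuous h := by
    refine continuous_pi fun i => continuous_pi fun k => ?_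
    have c1 : Continuous fun x : {f : ZMod p → EuclideanSpace ℝ (Fin d) //
        Function.Injective f} => (x.1 k, x.1 (k + (t i : ZMod p))) :=
      ((continuous_apply k).comp continuous_subtype_val).prodMk
        ((continuous_apply _).comp continuous_subtype_val)
    exact (continuous_of_metric (hρ i)).comp c1
  have hequiv : ∀ x, h (configShift x) = fun i k => h x i (k + 1) := by
    intro x
    funext i k
    simp only [hh, configShift]
    ring_nf
  have : ¬ ∀ x, ∃ i : Fin r, ∃ k : ZMod p, h x i k ≠ h x i 0 := by
    intro hB
    exact hmap ⟨h, hcont, hB, hequiv⟩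
  push_neg at this
  obtain ⟨x, hx⟩ := this
  refine ⟨x.1, x.2, fun i k => ?_⟩
  have h1 := hx i (k * (t i : ZMod p))
  simp only [hh] at h1
  have hk : (k + 1) * (t i : ZMod p) = k * (t i : ZMod p) + (t i : ZMod p) := by ring
  rw [hk]
  simpa using h1
end

section
/- There do not exist three distinct points z₀, z₁, z₂ in ℝ² that form an equilateral triangle simultaneously for the Euclidean norm and for the taxicab norm; that is, there are no distinct z₀, z₁, z₂ ∈ ℝ² with ‖z₀−z₁‖₂ = ‖z₁−z₂‖₂ = ‖z₂−z₀‖₂ and ‖z₀−z₁‖₁ = ‖z₁−z₂‖₁ = ‖z₂−z₀‖₁. -/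
/-- The Euclidean norm on `ℝ²`. -/
noncomputable def euclNorm (z : ℝ × ℝ) : ℝ := Real.sqrt (z.1 ^ 2 + z.2 ^ 2)

/-- The taxicab norm on `ℝ²`. -/
def taxiNorm (z : ℝ × ℝ) : ℝ := |z.1| + |z.2|

lemma swap_lemma (p q r s : ℝ) (hsum : p + q = r + s) (hsq : p^2 + q^2 = r^2 + s^2) :
    (p = r ∧ q = s) ∨ (p = s ∧ q = r) := by
  have h : (p - r) * (p - s) = 0 := by
    linear_combination (p - (p+q+r+s)/2) * hsum + (1/2 : ℝ) * hsq
  rcases mul_eq_zero.1 h with h' | h'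
  · left; constructor <;> linarith
  · right; constructor <;> linarith

lemma fin_lemma (x y : ℝ) (hx : 0 ≤ x) (hy : 0 ≤ y) (hpos : 0 < x + y)
    (h1 : x^2 = 4*(x*y)) (h2 : y^2 = 4*(x*y)) : False := by
  have h3 : (x - y) * (x + y) = 0 := by linear_combination h1 - h2
  have hxy : x = y := by
    rcases mul_eq_zero.1 h3 with h | h
    · linarith
    · linarith
  subst hxy
  have hx0 : x^2 = 0 := by linear_combination (-(1:ℝ)/3) * h1
  have : x = 0 := sq_eq_zero_iff.mp hx0
  linarith

lemma key (a1 a2 b1 b2 : ℝ)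
    (h1 : a1^2 + a2^2 = b1^2 + b2^2)
    (h2 : b1^2 + b2^2 = (a1+b1)^2 + (a2+b2)^2)
    (h3 : |a1| + |a2| = |b1| + |b2|)
    (h4 : |b1| + |b2| = |a1+b1| + |a2+b2|)
    (hpos : 0 < a1^2 + a2^2) : False := by
  have hb : (|a1| = |b1| ∧ |a2| = |b2|) ∨ (|a1| = |b2| ∧ |a2| = |b1|) := by
    apply swap_lemma
    · exact h3
    · rw [sq_abs, sq_abs, sq_abs, sq_abs]; exact h1
  have hc : (|a1| = |a1+b1| ∧ |a2| = |a2+b2|) ∨ (|a1| = |a2+b2| ∧ |a2| = |a1+b1|) := by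
    apply swap_lemma
    · rw [h3, h4]
    · rw [sq_abs, sq_abs, sq_abs, sq_abs, h1, h2]
  have sq_of : ∀ x y : ℝ, |x| = |y| → x^2 = y^2 := by
    intro x y h; rw [← sq_abs x, ← sq_abs y, h]
  rcases hb with ⟨hb1, hb2⟩ | ⟨hb1, hb2⟩ <;> rcases hc with ⟨hc1, hc2⟩ | ⟨hc1, hc2⟩
  · have e1 := sq_of _ _ hb1
    have e2 := sq_of _ _ hb2
    have e3 := sq_of _ _ hc1
    have e4 := sq_of _ _ hc2
    have k1 : 2*a1*b1 + a1^2 = 0 := by linear_combination e1 - e3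
    have k2 : 2*a2*b2 + a2^2 = 0 := by linear_combination e2 - e4
    have k1s := congrArg (fun t : ℝ => t^2) k1
    have k2s := congrArg (fun t : ℝ => t^2) k2
    have q1 : a1^4 = 0 := by
      linear_combination ((1:ℝ)/3) * k1s + ((4:ℝ)/3)*a1^2 * e1 - ((2:ℝ)/3)*a1^2*k1
    have q2 : a2^4 = 0 := by
      linear_combination ((1:ℝ)/3) * k2s + ((4:ℝ)/3)*a2^2 * e2 - ((2:ℝ)/3)*a2^2*k2
    have ha1 : a1 = 0 := pow_eq_zero_iff (by norm_num : (4:ℕ) ≠ 0) |>.mp q1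
    have ha2 : a2 = 0 := pow_eq_zero_iff (by norm_num : (4:ℕ) ≠ 0) |>.mp q2
    rw [ha1, ha2] at hpos; norm_num at hpos
  · have e1 := sq_of _ _ hb1
    have e2 := sq_of _ _ hb2
    have e3 := sq_of _ _ hc1
    have e4 := sq_of _ _ hc2
    have k1 : 2*a2*b2 = a1^2 - 2*a2^2 := by linear_combination e2 - e3
    have k2 : 2*a1*b1 = a2^2 - 2*a1^2 := by linear_combination e1 - e4
    have k1s := congrArg (fun t : ℝ => t^2) k1
    have k2s := congrArg (fun t : ℝ => t^2) k2
    have q1 : (a1^2)^2 = 4*(a1^2*a2^2) := by linear_combination -k1s - 4*a2^2*e2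
    have q2 : (a2^2)^2 = 4*(a2^2*a1^2) := by linear_combination -k2s - 4*a1^2*e1
    exact fin_lemma (a1^2) (a2^2) (sq_nonneg _) (sq_nonneg _) hpos q1 (by linear_combination q2)
  · have e1 := sq_of _ _ hb1
    have e2 := sq_of _ _ hb2
    have e3 := sq_of _ _ hc1
    have e4 := sq_of _ _ hc2
    have k1 : 2*a1*b1 = -a2^2 := by linear_combination e2 - e3
    have k2 : 2*a2*b2 = -a1^2 := by linear_combination e1 - e4
    have k1s := congrArg (fun t : ℝ => t^2) k1
    have k2s := congrArg (fun t : ℝ => t^2) k2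
    have q1 : (a2^2)^2 = 4*(a1^2*a2^2) := by linear_combination -k1s - 4*a1^2*e2
    have q2 : (a1^2)^2 = 4*(a2^2*a1^2) := by linear_combination -k2s - 4*a2^2*e1
    exact fin_lemma (a1^2) (a2^2) (sq_nonneg _) (sq_nonneg _) hpos
      (by linear_combination q2) (by linear_combination q1)
  · have e1 := sq_of _ _ hb1
    have e2 := sq_of _ _ hb2
    have e3 := sq_of _ _ hc1
    have e4 := sq_of _ _ hc2
    have k1 : 2*a2*b2 = -a2^2 := by linear_combination e1 - e3
    have k2 : 2*a1*b1 = -a1^2 := by linear_combination e2 - e4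
    have k1s := congrArg (fun t : ℝ => t^2) k1
    have k2s := congrArg (fun t : ℝ => t^2) k2
    have q1 : (a2^2)^2 = 4*(a2^2*a1^2) := by linear_combination -k1s - 4*a2^2*e1
    have q2 : (a1^2)^2 = 4*(a1^2*a2^2) := by linear_combination -k2s - 4*a1^2*e2
    exact fin_lemma (a1^2) (a2^2) (sq_nonneg _) (sq_nonneg _) hpos q2 (by linear_combination q1)

/-- There is no triangle in `ℝ²` that is simultaneously equilateral for the
Euclidean norm and for the taxicab norm. -/
theorem no_biequilateral_triangle :
    ¬ ∃ z₀ z₁ z₂ : ℝ × ℝ, z₀ ≠ z₁ ∧ z₁ ≠ z₂ ∧ z₂ ≠ z₀ ∧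
      euclNorm (z₀ - z₁) = euclNorm (z₁ - z₂) ∧
      euclNorm (z₁ - z₂) = euclNorm (z₂ - z₀) ∧
      taxiNorm (z₀ - z₁) = taxiNorm (z₁ - z₂) ∧
      taxiNorm (z₁ - z₂) = taxiNorm (z₂ - z₀) := by
  rintro ⟨z₀, z₁, z₂, hne, -, -, he1, he2, ht1, ht2⟩
  have sqeq : ∀ u v : ℝ × ℝ, euclNorm u = euclNorm v → u.1^2 + u.2^2 = v.1^2 + v.2^2 := by
    intro u v h
    have h1 : (0:ℝ) ≤ u.1^2 + u.2^2 := by positivity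
    have h2 : (0:ℝ) ≤ v.1^2 + v.2^2 := by positivity
    rw [← Real.sq_sqrt h1, ← Real.sq_sqrt h2]
    exact congrArg (·^2) h
  set a1 := z₀.1 - z₁.1 with ha1
  set a2 := z₀.2 - z₁.2 with ha2
  set b1 := z₁.1 - z₂.1 with hb1
  set b2 := z₁.2 - z₂.2 with hb2
  have E1 := sqeq _ _ he1
  have E2 := sqeq _ _ he2
  simp only [Prod.fst_sub, Prod.snd_sub] at E1 E2
  simp only [taxiNorm, Prod.fst_sub, Prod.snd_sub] at ht1 ht2
  have c1 : z₂.1 - z₀.1 = -(a1 + b1) := by rw [ha1, hb1]; ring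
  have c2 : z₂.2 - z₀.2 = -(a2 + b2) := by rw [ha2, hb2]; ring
  rw [c1, c2] at E2 ht2
  have hz : ¬ (a1 = 0 ∧ a2 = 0) := by
    rintro ⟨u1, u2⟩
    apply hne
    have : z₀ - z₁ = 0 := Prod.ext u1 u2
    exact sub_eq_zero.mp this
  have hpos : 0 < a1^2 + a2^2 := by
    rcases not_and_or.mp hz with h | h
    · have : 0 < a1^2 := by positivity
      nlinarith [sq_nonneg a2]
    · have : 0 < a2^2 := by positivity
      nlinarith [sq_nonneg a1]
  apply key a1 a2 b1 b2 E1 (by linear_combination E2) ht1 (by rw [abs_neg, abs_neg] at ht2; exact ht2) hpos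
end

section
/- For every norm on ℝ³ there exists an equilateral set of size 4 with respect to the induced metric; that is, there exist four distinct points x₀, x₁, x₂, x₃ ∈ ℝ³ and a constant c > 0 such that ‖xᵢ − xⱼ‖ = c for all i ≠ j. -/
open Set
set_option linter.unusedSectionVars false
set_option maxHeartbeats 1000000

noncomputable section


def Dvec (n : (Fin 3 → ℝ) → ℝ) : Fin 3 → ℝ := (n (Pi.single 0 1))⁻¹ • (Pi.single 0 1 : Fin 3 → ℝ)
def wvec (θ : ℝ) : Fin 3 → ℝ := Real.cos θ • (Pi.single 1 1 : Fin 3 → ℝ) + Real.sin θ • (Pi.single 2 1 : Fin 3 → ℝ)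
def pvec (n : (Fin 3 → ℝ) → ℝ) (a b θ : ℝ) : Fin 3 → ℝ := a • Dvec n + b • wvec θ

variable (n : (Fin 3 → ℝ) → ℝ)
  (h0 : ∀ x, n x = 0 ↔ x = 0)
  (hsmul : ∀ (a : ℝ) (x), n (a • x) = |a| * n x)
  (htri : ∀ x y, n (x + y) ≤ n x + n y)

include h0 hsmul htri


lemma peq_zero : n 0 = 0 := by
  have := hsmul 0 0; simpa using this

lemma peq_neg (x) : n (-x) = n x := by
  have := hsmul (-1) x; simpa using this

lemma peq_nonneg (x) : 0 ≤ n x := by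
  have h1 := htri x (-x)
  rw [add_neg_cancel, peq_zero n h0 hsmul htri, peq_neg n h0 hsmul htri] at h1
  linarith

lemma peq_sub_comm (x y) : n (x - y) = n (y - x) := by
  rw [← peq_neg n h0 hsmul htri (y - x), neg_sub]

lemma peq_tri_sub (x y z) : n (x - z) ≤ n (x - y) + n (y - z) := by
  have := htri (x - y) (y - z); rwa [sub_add_sub_cancel] at this

lemma peq_pos {x} (hx : x ≠ 0) : 0 < n x :=
  lt_of_le_of_ne (peq_nonneg n h0 hsmul htri x) (fun h => hx ((h0 x).mp h.symm))

lemma peq_decomp (z : Fin 3 → ℝ) :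
    z = z 0 • (Pi.single 0 1 : Fin 3 → ℝ) + z 1 • (Pi.single 1 1 : Fin 3 → ℝ)
      + z 2 • (Pi.single 2 1 : Fin 3 → ℝ) := by
  funext i; fin_cases i <;> simp

lemma peq_bound (z : Fin 3 → ℝ) :
    n z ≤ (n (Pi.single 0 1) + n (Pi.single 1 1) + n (Pi.single 2 1)) * ‖z‖ := by
  set E : Fin 3 → (Fin 3 → ℝ) := fun i => Pi.single i 1 with hE
  have h1 : n z ≤ n (z 0 • E 0) + n (z 1 • E 1) + n (z 2 • E 2) := by
    calc n z = n (z 0 • E 0 + z 1 • E 1 + z 2 • E 2) := by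
          rw [← peq_decomp n h0 hsmul htri z]
      _ ≤ n (z 0 • E 0 + z 1 • E 1) + n (z 2 • E 2) := htri _ _
      _ ≤ n (z 0 • E 0) + n (z 1 • E 1) + n (z 2 • E 2) := by
          have := htri (z 0 • E 0) (z 1 • E 1); linarith
  have hz : ∀ i : Fin 3, |z i| ≤ ‖z‖ := fun i => by
    simpa using norm_le_pi_norm z i
  have h2 : ∀ i : Fin 3, n (z i • E i) ≤ n (E i) * ‖z‖ := fun i => by
    rw [hsmul]
    have := peq_nonneg n h0 hsmul htri (E i)
    calc |z i| * n (E i) ≤ ‖z‖ * n (E i) := by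
          apply mul_le_mul_of_nonneg_right (hz i) this
      _ = n (E i) * ‖z‖ := mul_comm _ _
  have := h2 0; have := h2 1; have := h2 2
  simp only [hE] at *
  nlinarith [norm_nonneg z]

lemma peq_lip (x y) : |n x - n y| ≤ n (x - y) := by
  rw [abs_le]
  constructor
  · have := peq_tri_sub n h0 hsmul htri y x y  -- n (y - y) ≤ ...
    have h2 := htri (y - x) x
    rw [sub_add_cancel] at h2
    rw [peq_sub_comm n h0 hsmul htri x y]; linarith
  · have h2 := htri (x - y) y
    rw [sub_add_cancel] at h2; linarith

lemma peq_cont : Continuous n := by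
  set C := n (Pi.single 0 1) + n (Pi.single 1 1) + n (Pi.single 2 1) with hC
  have hC0 : 0 ≤ C := by
    have := peq_nonneg n h0 hsmul htri (Pi.single 0 1)
    have := peq_nonneg n h0 hsmul htri (Pi.single 1 1)
    have := peq_nonneg n h0 hsmul htri (Pi.single 2 1)
    simp only [hC]; linarith
  have : LipschitzWith C.toNNReal n := by
    apply LipschitzWith.of_dist_le_mul
    intro x y
    rw [Real.dist_eq, dist_eq_norm]
    calc |n x - n y| ≤ n (x - y) := peq_lip n h0 hsmul htri x y
      _ ≤ C * ‖x - y‖ := peq_bound n h0 hsmul htri (x - y)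
      _ = C.toNNReal * ‖x - y‖ := by rw [Real.coe_toNNReal C hC0]
  exact this.continuous

lemma peq_lower : ∃ ε > 0, ∀ x, ε * ‖x‖ ≤ n x := by
  obtain ⟨m, hm, hmin⟩ := (isCompact_sphere (0 : Fin 3 → ℝ) 1).exists_isMinOn
    ⟨(fun _ => 1 : Fin 3 → ℝ), by simp [mem_sphere_iff_norm]⟩
    ((peq_cont n h0 hsmul htri).continuousOn)
  have hm1 : ‖m‖ = 1 := by simpa [mem_sphere_iff_norm] using hm
  have hmne : m ≠ 0 := by intro h; rw [h] at hm1; simp at hm1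
  refine ⟨n m, peq_pos n h0 hsmul htri hmne, fun x => ?_⟩
  rcases eq_or_ne x 0 with rfl | hx
  · simp [peq_zero n h0 hsmul htri]
  · have hxn : ‖x‖ ≠ 0 := norm_ne_zero_iff.mpr hx
    have hsph : (‖x‖⁻¹ • x) ∈ Metric.sphere (0 : Fin 3 → ℝ) 1 := by
      simp [mem_sphere_iff_norm, norm_smul, abs_of_nonneg (inv_nonneg.mpr (norm_nonneg x)),
        inv_mul_cancel₀ hxn]
    have := hmin hsph
    have heq : n (‖x‖⁻¹ • x) = ‖x‖⁻¹ * n x := by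
      rw [hsmul, abs_of_nonneg (inv_nonneg.mpr (norm_nonneg x))]
    simp only [IsMinOn, IsMinFilter] at this
    have h2 : n m ≤ ‖x‖⁻¹ * n x := by rw [← heq]; exact hmin hsph
    have hpos : (0:ℝ) < ‖x‖ := lt_of_le_of_ne (norm_nonneg x) (Ne.symm hxn)
    calc n m * ‖x‖ ≤ (‖x‖⁻¹ * n x) * ‖x‖ := by
          apply mul_le_mul_of_nonneg_right h2 (norm_nonneg x)
      _ = n x := by field_simp


lemma peq_neg' (x) : n (-x) = n x := by
  have := hsmul (-1) x; simpa using this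

lemma peq_mono_key {D p q : Fin 3 → ℝ} {t r : ℝ}
    (hD : n D = 1) (hp : n p = 1) (hq : n q = 1)
    (ht0 : 0 ≤ t) (ht1 : t ≤ 1) (hr : 0 < r)
    (hm : r • p = (1 - t) • D + t • q) :
    n (p - D) ≤ n (q - D) := by
  have hnn : ∀ y, 0 ≤ n y := by
    intro y
    have h1 := htri y (-y)
    have h2 := peq_neg' n h0 hsmul htri y
    have h3 : n 0 = 0 := (h0 0).mpr rfl
    rw [add_neg_cancel, h3, h2] at h1; linarith
  have hrn : n (r • p) = r := by rw [hsmul, hp, abs_of_pos hr, mul_one]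
  have hr1 : r ≤ 1 := by
    have h1 : n ((1 - t) • D + t • q) ≤ (1 - t) + t := by
      calc n ((1 - t) • D + t • q) ≤ n ((1 - t) • D) + n (t • q) := htri _ _
        _ = (1 - t) + t := by
            rw [hsmul, hsmul, hD, hq, abs_of_nonneg (by linarith : (0:ℝ) ≤ 1 - t),
              abs_of_nonneg ht0]; ring
    rw [← hm, hrn] at h1; linarith
  have h1 : n (p - r • p) = 1 - r := by
    have : p - r • p = (1 - r) • p := by module
    rw [this, hsmul, hp, abs_of_nonneg (by linarith : (0:ℝ) ≤ 1 - r), mul_one]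
  have h2 : n (r • p - D) = t * n (q - D) := by
    have : r • p - D = t • (q - D) := by rw [hm]; module
    rw [this, hsmul, abs_of_nonneg ht0]
  have h3 : 1 - r ≤ (1 - t) * n (q - D) := by
    have e1 : q - r • p = (1 - t) • (q - D) := by rw [hm]; module
    have e2 : n q ≤ n (q - r • p) + n (r • p) := by
      have := htri (q - r • p) (r • p); rwa [sub_add_cancel] at this
    rw [hq, hrn, e1, hsmul, abs_of_nonneg (by linarith : (0:ℝ) ≤ 1 - t)] at e2
    linarith
  have h4 : n (p - D) ≤ n (p - r • p) + n (r • p - D) := by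
    have := htri (p - r • p) (r • p - D); rwa [sub_add_sub_cancel] at this
  rw [h1, h2] at h4
  have hq0 : 0 ≤ n (q - D) := hnn _
  nlinarith

omit h0 hsmul htri

lemma Dvec_coords (hc : n (Pi.single 0 1) ≠ 0) :
    Dvec n 0 = (n (Pi.single 0 1))⁻¹ ∧ Dvec n 1 = 0 ∧ Dvec n 2 = 0 := by
  unfold Dvec; refine ⟨?_, ?_, ?_⟩ <;> simp

lemma wvec_coords (θ : ℝ) :
    wvec θ 0 = 0 ∧ wvec θ 1 = Real.cos θ ∧ wvec θ 2 = Real.sin θ := by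
  unfold wvec; refine ⟨?_, ?_, ?_⟩ <;> simp

lemma pvec_coords (a b θ : ℝ) :
    pvec n a b θ 0 = a * (n (Pi.single 0 1))⁻¹ ∧
    pvec n a b θ 1 = b * Real.cos θ ∧ pvec n a b θ 2 = b * Real.sin θ := by
  unfold pvec Dvec wvec
  refine ⟨?_, ?_, ?_⟩ <;> simp <;> ring

def seam (n : (Fin 3 → ℝ) → ℝ) : Set (Fin 3 → ℝ) :=
  {x | n x = 1 ∧ n (x - Dvec n) = 1}

def ksl (n : (Fin 3 → ℝ) → ℝ) (θ : ℝ) : Set (Fin 3 → ℝ) :=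
  {x | x ∈ seam n ∧ x 1 * Real.sin θ = x 2 * Real.cos θ ∧
       0 ≤ x 1 * Real.cos θ + x 2 * Real.sin θ}

def bv (n : (Fin 3 → ℝ) → ℝ) (θ s : ℝ) : Fin 3 → ℝ := pvec n (Real.cos s) (Real.sin s) θ

def rho (n : (Fin 3 → ℝ) → ℝ) (θ s : ℝ) : Fin 3 → ℝ := (n (bv n θ s))⁻¹ • bv n θ s

def Mfun (n : (Fin 3 → ℝ) → ℝ) (θ s : ℝ) : ℝ := n (rho n θ s - Dvec n)

lemma vec_ext {x y : Fin 3 → ℝ} (hh0 : x 0 = y 0) (hh1 : x 1 = y 1) (hh2 : x 2 = y 2) :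
    x = y := by
  funext i; fin_cases i
  · exact hh0
  · exact hh1
  · exact hh2

lemma single0_ne : (Pi.single 0 1 : Fin 3 → ℝ) ≠ 0 := by
  intro h; have := congrFun h 0; simp at this

include h0 hsmul htri

lemma c0_pos : 0 < n (Pi.single 0 1) := by
  rcases lt_or_eq_of_le (peq_nonneg n h0 hsmul htri (Pi.single 0 1)) with h | h
  · exact h
  · exact absurd ((h0 _).mp h.symm) single0_ne

lemma Dvec_norm : n (Dvec n) = 1 := by
  unfold Dvec
  rw [hsmul, abs_of_pos (inv_pos.mpr (c0_pos n h0 hsmul htri)),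
    inv_mul_cancel₀ (ne_of_gt (c0_pos n h0 hsmul htri))]

omit h0 hsmul htri

lemma pvec_smul (c a b θ : ℝ) : c • pvec n a b θ = pvec n (c * a) (c * b) θ := by
  unfold pvec; module

lemma pvec_eq_zero {a b θ : ℝ} (hc : n (Pi.single 0 1) ≠ 0) (h : pvec n a b θ = 0) :
    a = 0 ∧ b = 0 := by
  obtain ⟨e0, e1, e2⟩ := pvec_coords n a b θ
  have h0' := congrFun h 0
  have h1' := congrFun h 1
  have h2' := congrFun h 2
  rw [e0] at h0'; rw [e1] at h1'; rw [e2] at h2'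
  simp only [Pi.zero_apply] at h0' h1' h2'
  constructor
  · field_simp at h0'; simpa using h0'
  · have hs := Real.sin_sq_add_cos_sq θ
    linear_combination Real.cos θ * h1' + Real.sin θ * h2' - b * hs

lemma ksl_repr {x : Fin 3 → ℝ} {θ : ℝ} (hc : n (Pi.single 0 1) ≠ 0)
    (hx : x ∈ ksl n θ) :
    x = pvec n (n (Pi.single 0 1) * x 0) (x 1 * Real.cos θ + x 2 * Real.sin θ) θ := by
  obtain ⟨-, hx1, -⟩ := hx
  obtain ⟨e0, e1, e2⟩ := pvec_coords n (n (Pi.single 0 1) * x 0)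
    (x 1 * Real.cos θ + x 2 * Real.sin θ) θ
  apply vec_ext
  · rw [e0]; field_simp
  · rw [e1]
    linear_combination Real.sin θ * hx1 - x 1 * Real.sin_sq_add_cos_sq θ
  · rw [e2]
    linear_combination (-(Real.cos θ)) * hx1 - x 2 * Real.sin_sq_add_cos_sq θ

lemma pvec_kslcond {a b θ : ℝ} (hb : 0 ≤ b) :
    pvec n a b θ 1 * Real.sin θ = pvec n a b θ 2 * Real.cos θ ∧
    0 ≤ pvec n a b θ 1 * Real.cos θ + pvec n a b θ 2 * Real.sin θ := by
  obtain ⟨e0, e1, e2⟩ := pvec_coords n a b θ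
  rw [e1, e2]
  constructor
  · ring
  · nlinarith [Real.sin_sq_add_cos_sq θ]


include h0 hsmul htri

lemma seam_offaxis {x : Fin 3 → ℝ} (hx : x ∈ seam n) : ¬(x 1 = 0 ∧ x 2 = 0) := by
  rintro ⟨hx1, hx2⟩
  obtain ⟨hxn, hxD⟩ := hx
  have hc := c0_pos n h0 hsmul htri
  set c0 := n (Pi.single 0 1) with hc0
  have hxe : x = (c0 * x 0) • Dvec n := by
    apply vec_ext
    · obtain ⟨d0, d1, d2⟩ := Dvec_coords n (ne_of_gt hc)
      simp only [Pi.smul_apply, d0, smul_eq_mul, ← hc0]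
      field_simp
    · obtain ⟨d0, d1, d2⟩ := Dvec_coords n (ne_of_gt hc)
      simp only [Pi.smul_apply, d1, smul_eq_mul]; rw [hx1]; ring
    · obtain ⟨d0, d1, d2⟩ := Dvec_coords n (ne_of_gt hc)
      simp only [Pi.smul_apply, d2, smul_eq_mul]; rw [hx2]; ring
  set z := c0 * x 0 with hz
  have h1 : |z| = 1 := by
    rw [hxe, hsmul, Dvec_norm n h0 hsmul htri, mul_one] at hxn; exact hxn
  have h2 : |z - 1| = 1 := by
    have : x - Dvec n = (z - 1) • Dvec n := by rw [hxe]; module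
    rw [this, hsmul, Dvec_norm n h0 hsmul htri, mul_one] at hxD; exact hxD
  rcases abs_eq (by norm_num : (0:ℝ) ≤ 1) |>.mp h1 with h | h <;>
    rcases abs_eq (by norm_num : (0:ℝ) ≤ 1) |>.mp h2 with h' | h' <;> linarith

lemma seam_cover {x : Fin 3 → ℝ} (hx : x ∈ seam n) : ∃ θ, x ∈ ksl n θ := by
  set z : ℂ := ⟨x 1, x 2⟩ with hzdef
  have hz : z ≠ 0 := by
    intro h
    exact seam_offaxis n h0 hsmul htri hx
      ⟨congrArg Complex.re h, congrArg Complex.im h⟩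
  have habs : (0:ℝ) < ‖z‖ := by
    simpa using (norm_pos_iff.mpr hz)
  refine ⟨Complex.arg z, hx, ?_, ?_⟩
  · rw [Complex.sin_arg, Complex.cos_arg hz]
    show x 1 * (z.im / ‖z‖) = x 2 * (z.re / ‖z‖)
    have : z.im = x 2 := rfl
    have : z.re = x 1 := rfl
    simp only [hzdef]
    ring
  · rw [Complex.sin_arg, Complex.cos_arg hz]
    show 0 ≤ x 1 * (z.re / ‖z‖) + x 2 * (z.im / ‖z‖)
    have hre : z.re = x 1 := rfl
    have him : z.im = x 2 := rfl
    rw [hre, him]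
    have : x 1 * (x 1 / ‖z‖) + x 2 * (x 2 / ‖z‖)
        = (x 1 ^ 2 + x 2 ^ 2) / ‖z‖ := by ring
    rw [this]
    positivity

omit h0 hsmul htri

lemma bv_ne (hc : n (Pi.single 0 1) ≠ 0) (θ s : ℝ) : bv n θ s ≠ 0 := by
  intro h
  obtain ⟨h1, h2⟩ := pvec_eq_zero n hc h
  have := Real.sin_sq_add_cos_sq s
  rw [h1, h2] at this; norm_num at this

include h0 hsmul htri

lemma bv_pos (θ s : ℝ) : 0 < n (bv n θ s) :=
  peq_pos n h0 hsmul htri (bv_ne n (ne_of_gt (c0_pos n h0 hsmul htri)) θ s)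

lemma rho_norm (θ s : ℝ) : n (rho n θ s) = 1 := by
  unfold rho
  rw [hsmul, abs_of_pos (inv_pos.mpr (bv_pos n h0 hsmul htri θ s)),
    inv_mul_cancel₀ (ne_of_gt (bv_pos n h0 hsmul htri θ s))]

lemma bv_cont (θ : ℝ) : Continuous (bv n θ) := by
  unfold bv pvec
  exact (Real.continuous_cos.smul continuous_const).add
    (Real.continuous_sin.smul continuous_const)

lemma rho_cont (θ : ℝ) : Continuous (rho n θ) := by
  unfold rho
  exact (((peq_cont n h0 hsmul htri).comp (bv_cont n h0 hsmul htri θ)).inv₀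
    (fun s => ne_of_gt (bv_pos n h0 hsmul htri θ s))).smul (bv_cont n h0 hsmul htri θ)

lemma Mfun_cont (θ : ℝ) : Continuous (Mfun n θ) := by
  unfold Mfun
  exact (peq_cont n h0 hsmul htri).comp ((rho_cont n h0 hsmul htri θ).sub continuous_const)

lemma rho_zero (θ : ℝ) : rho n θ 0 = Dvec n := by
  have hb : bv n θ 0 = Dvec n := by
    unfold bv pvec
    rw [Real.cos_zero, Real.sin_zero]
    module
  unfold rho
  rw [hb, Dvec_norm n h0 hsmul htri]
  norm_num

lemma rho_pi (θ : ℝ) : rho n θ Real.pi = -Dvec n := by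
  have hb : bv n θ Real.pi = -Dvec n := by
    unfold bv pvec
    rw [Real.cos_pi, Real.sin_pi]
    module
  unfold rho
  rw [hb, peq_neg' n h0 hsmul htri, Dvec_norm n h0 hsmul htri]
  norm_num

lemma Mfun_zero (θ : ℝ) : Mfun n θ 0 = 0 := by
  unfold Mfun
  rw [rho_zero n h0 hsmul htri, sub_self]
  exact (h0 0).mpr rfl

lemma Mfun_pi (θ : ℝ) : Mfun n θ Real.pi = 2 := by
  unfold Mfun
  rw [rho_pi n h0 hsmul htri]
  have : -Dvec n - Dvec n = (-2 : ℝ) • Dvec n := by module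
  rw [this, hsmul, Dvec_norm n h0 hsmul htri]
  norm_num


omit h0 hsmul htri

lemma pvec_add (a b a' b' θ : ℝ) :
    pvec n a b θ + pvec n a' b' θ = pvec n (a + a') (b + b') θ := by
  unfold pvec; module

lemma pvec_one_zero (θ : ℝ) : pvec n 1 0 θ = Dvec n := by
  unfold pvec; module

lemma rho_eq (θ s : ℝ) :
    rho n θ s = pvec n ((n (bv n θ s))⁻¹ * Real.cos s) ((n (bv n θ s))⁻¹ * Real.sin s) θ := by
  unfold rho
  rw [show bv n θ s = pvec n (Real.cos s) (Real.sin s) θ from rfl, pvec_smul]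

include h0 hsmul htri

lemma Mfun_mono {θ s s' : ℝ} (hs0 : 0 ≤ s) (hss : s ≤ s') (hs1 : s' ≤ Real.pi) :
    Mfun n θ s ≤ Mfun n θ s' := by
  rcases eq_or_lt_of_le hs0 with rfl | hs0'
  · rw [Mfun_zero n h0 hsmul htri]
    exact peq_nonneg n h0 hsmul htri _
  rcases eq_or_lt_of_le hs1 with rfl | hs1'
  · rw [Mfun_pi n h0 hsmul htri]
    unfold Mfun
    calc n (rho n θ s - Dvec n) = n (rho n θ s + -Dvec n) := by rw [sub_eq_add_neg]
      _ ≤ n (rho n θ s) + n (-Dvec n) := htri _ _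
      _ = 2 := by
          rw [rho_norm n h0 hsmul htri, peq_neg' n h0 hsmul htri,
            Dvec_norm n h0 hsmul htri]; norm_num
  -- now 0 < s ≤ s' < π
  have hsinp : 0 < Real.sin s := Real.sin_pos_of_pos_of_lt_pi hs0' (lt_of_le_of_lt hss hs1')
  have hsinq : 0 < Real.sin s' := Real.sin_pos_of_pos_of_lt_pi (lt_of_lt_of_le hs0' hss) hs1'
  set Ns := n (bv n θ s) with hNs
  set Nq := n (bv n θ s') with hNq
  have hNsp : 0 < Ns := bv_pos n h0 hsmul htri θ s
  have hNqp : 0 < Nq := bv_pos n h0 hsmul htri θ s'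
  set pa := Ns⁻¹ * Real.cos s with hpa
  set pb := Ns⁻¹ * Real.sin s with hpb
  set qa := Nq⁻¹ * Real.cos s' with hqa
  set qb := Nq⁻¹ * Real.sin s' with hqb
  have hpbp : 0 < pb := mul_pos (inv_pos.mpr hNsp) hsinp
  have hqbp : 0 < qb := mul_pos (inv_pos.mpr hNqp) hsinq
  set ψ : ℝ → ℝ := fun t => t * (pa * qb) - pb * ((1 - t) + t * qa) with hψ
  have hψc : Continuous ψ := by fun_prop
  have hψ0 : ψ 0 = -pb := by simp [hψ]
  have hψ1 : ψ 1 = pa * qb - pb * qa := by simp [hψ]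
  have hψ1' : 0 ≤ ψ 1 := by
    rw [hψ1, hpa, hpb, hqa, hqb]
    have : Ns⁻¹ * Real.cos s * (Nq⁻¹ * Real.sin s') - Ns⁻¹ * Real.sin s * (Nq⁻¹ * Real.cos s')
        = Ns⁻¹ * Nq⁻¹ * Real.sin (s' - s) := by
      rw [Real.sin_sub]; ring
    rw [this]
    have hsge : 0 ≤ Real.sin (s' - s) :=
      Real.sin_nonneg_of_nonneg_of_le_pi (by linarith) (by
        have := Real.pi_pos; linarith)
    positivity
  have hivt := intermediate_value_Icc (by norm_num : (0:ℝ) ≤ 1) hψc.continuousOn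
  have h0mem : (0:ℝ) ∈ Icc (ψ 0) (ψ 1) := by
    constructor
    · rw [hψ0]; linarith
    · exact hψ1'
  obtain ⟨t, htmem, hψt⟩ := hivt h0mem
  obtain ⟨ht0, ht1⟩ := htmem
  set ma := (1 - t) + t * qa with hma
  set mb := t * qb with hmb
  have hkey : pa * mb = pb * ma := by
    rw [hma, hmb]
    have : ψ t = 0 := hψt
    rw [hψ] at this
    simp only at this
    linarith [this]
  have hmb0 : 0 ≤ mb := mul_nonneg ht0 hqbp.le
  set r := mb / pb with hr
  have hr0 : 0 ≤ r := div_nonneg hmb0 hpbp.le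
  have hrpos : 0 < r := by
    rcases lt_or_eq_of_le hr0 with h | h
    · exact h
    have hmb' : mb = 0 := by
      have hdiv : mb / pb = 0 := h.symm
      rcases div_eq_zero_iff.mp hdiv with h' | h'
      · exact h'
      · exact absurd h' (ne_of_gt hpbp)
    have ht' : t = 0 := by
      have htq : t * qb = 0 := by rw [← hmb]; exact hmb'
      rcases mul_eq_zero.mp htq with h | h
      · exact h
      · exact absurd h (ne_of_gt hqbp)
    have : ma = 1 := by rw [hma, ht']; ring
    rw [this, hmb', mul_zero] at hkey
    exact absurd hkey.symm (by simpa using (ne_of_gt hpbp))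
  have hrpa : r * pa = ma := by
    rw [hr]
    field_simp
    linear_combination hkey
  have hrpb : r * pb = mb := by
    rw [hr]; field_simp
  have hm : r • rho n θ s = (1 - t) • Dvec n + t • rho n θ s' := by
    rw [rho_eq n θ s, rho_eq n θ s', pvec_smul, ← hpa, ← hpb, ← hqa, ← hqb,
      hrpa, hrpb, ← pvec_one_zero n θ, pvec_smul, pvec_smul, pvec_add]
    rw [hma, hmb]
    norm_num
  have := peq_mono_key n h0 hsmul htri (Dvec_norm n h0 hsmul htri)
    (rho_norm n h0 hsmul htri θ s) (rho_norm n h0 hsmul htri θ s')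
    ht0 ht1 hrpos hm
  exact this

lemma ksl_eq_image (θ : ℝ) :
    ksl n θ = rho n θ '' {s | s ∈ Icc 0 Real.pi ∧ Mfun n θ s = 1} := by
  have hc := c0_pos n h0 hsmul htri
  ext x
  constructor
  · rintro hx
    obtain ⟨⟨hxn, hxD⟩, hx1, hx2⟩ := hx
    set a := n (Pi.single 0 1) * x 0 with ha
    set b := x 1 * Real.cos θ + x 2 * Real.sin θ with hb
    have hxe : x = pvec n a b θ := ksl_repr n (ne_of_gt hc) ⟨⟨hxn, hxD⟩, hx1, hx2⟩
    have hab : ¬(a = 0 ∧ b = 0) := by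
      rintro ⟨rfl_a, rfl_b⟩
      have : x = 0 := by
        rw [hxe, rfl_a, rfl_b]
        unfold pvec; module
      rw [this, (h0 0).mpr rfl] at hxn
      norm_num at hxn
    have hr2 : 0 < a ^ 2 + b ^ 2 := by
      rcases eq_or_ne a 0 with h | h
      · rcases eq_or_ne b 0 with h' | h'
        · exact absurd ⟨h, h'⟩ hab
        · positivity
      · positivity
    set r := Real.sqrt (a ^ 2 + b ^ 2) with hrdef
    have hrpos : 0 < r := Real.sqrt_pos.mpr hr2
    have hrsq : r ^ 2 = a ^ 2 + b ^ 2 := Real.sq_sqrt hr2.le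
    have haler : |a| ≤ r := by
      rw [← Real.sqrt_sq_eq_abs]
      exact Real.sqrt_le_sqrt (by nlinarith)
    set s := Real.arccos (a / r) with hsdef
    have hsmem : s ∈ Icc 0 Real.pi := ⟨Real.arccos_nonneg _, Real.arccos_le_pi _⟩
    have hbound : -1 ≤ a / r ∧ a / r ≤ 1 := by
      rw [← abs_le, abs_div, abs_of_pos hrpos]
      exact div_le_one_of_le₀ haler hrpos.le
    have hcos : Real.cos s = a / r := Real.cos_arccos hbound.1 hbound.2
    have hsin : Real.sin s = b / r := by
      rw [hsdef, Real.sin_arccos]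
      have h1 : 1 - (a / r) ^ 2 = (b / r) ^ 2 := by
        field_simp
        linarith [hrsq]
      rw [h1, Real.sqrt_sq (by positivity)]
    have hbv : bv n θ s = r⁻¹ • x := by
      rw [show bv n θ s = pvec n (Real.cos s) (Real.sin s) θ from rfl, hcos, hsin,
        hxe, pvec_smul]
      congr 1 <;> field_simp
    have hNs : n (bv n θ s) = r⁻¹ := by
      rw [hbv, hsmul, abs_of_pos (inv_pos.mpr hrpos), hxn, mul_one]
    have hrho : rho n θ s = x := by
      unfold rho
      rw [hNs, hbv, smul_smul, inv_inv, mul_inv_cancel₀ (ne_of_gt hrpos), one_smul]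
    refine ⟨s, ⟨hsmem, ?_⟩, hrho⟩
    unfold Mfun
    rw [hrho]
    exact hxD
  · rintro ⟨s, ⟨hsmem, hMs⟩, rfl⟩
    have hsin : 0 ≤ Real.sin s := Real.sin_nonneg_of_nonneg_of_le_pi hsmem.1 hsmem.2
    have hb : 0 ≤ (n (bv n θ s))⁻¹ * Real.sin s :=
      mul_nonneg (inv_pos.mpr (bv_pos n h0 hsmul htri θ s)).le hsin
    have hcond := pvec_kslcond n (θ := θ) (a := (n (bv n θ s))⁻¹ * Real.cos s) hb
    refine ⟨⟨rho_norm n h0 hsmul htri θ s, hMs⟩, ?_, ?_⟩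
    · rw [rho_eq]; exact hcond.1
    · rw [rho_eq]; exact hcond.2

lemma ksl_nonempty (θ : ℝ) : (ksl n θ).Nonempty := by
  have hivt := intermediate_value_Icc Real.pi_pos.le (Mfun_cont n h0 hsmul htri θ).continuousOn
  have h1 : (1:ℝ) ∈ Icc (Mfun n θ 0) (Mfun n θ Real.pi) := by
    rw [Mfun_zero n h0 hsmul htri, Mfun_pi n h0 hsmul htri]
    norm_num
  obtain ⟨s, hsmem, hMs⟩ := hivt h1
  exact ⟨rho n θ s, by
    rw [ksl_eq_image n h0 hsmul htri θ]
    exact ⟨s, ⟨hsmem, hMs⟩, rfl⟩⟩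

lemma ksl_preconnected (θ : ℝ) : IsPreconnected (ksl n θ) := by
  rw [ksl_eq_image n h0 hsmul htri θ]
  apply IsPreconnected.image
  · apply Set.OrdConnected.isPreconnected
    constructor
    rintro a ⟨ha1, ha2⟩ b ⟨hb1, hb2⟩ c ⟨hc1, hc2⟩
    refine ⟨⟨ha1.1.trans hc1, hc2.trans hb1.2⟩, le_antisymm ?_ ?_⟩
    · rw [← hb2]
      exact Mfun_mono n h0 hsmul htri (ha1.1.trans hc1) hc2 hb1.2
    · rw [← ha2]
      exact Mfun_mono n h0 hsmul htri ha1.1 hc1 (hc2.trans hb1.2)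
  · exact (rho_cont n h0 hsmul htri θ).continuousOn


lemma seam_closed : IsClosed (seam n) := by
  have h1 : IsClosed {x : Fin 3 → ℝ | n x = 1} :=
    isClosed_eq (peq_cont n h0 hsmul htri) continuous_const
  have h2 : IsClosed {x : Fin 3 → ℝ | n (x - Dvec n) = 1} :=
    isClosed_eq ((peq_cont n h0 hsmul htri).comp (continuous_id.sub continuous_const))
      continuous_const
  exact h1.inter h2

lemma seam_compact : IsCompact (seam n) := by
  apply Metric.isCompact_of_isClosed_isBounded (seam_closed n h0 hsmul htri)
  obtain ⟨ε, hε, hlow⟩ := peq_lower n h0 hsmul htri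
  apply Bornology.IsBounded.subset (Metric.isBounded_closedBall (x := (0 : Fin 3 → ℝ)) (r := ε⁻¹))
  intro x hx
  rw [Metric.mem_closedBall, dist_zero_right]
  have := hlow x
  rw [hx.1] at this
  rw [← le_div_iff₀' hε] at this
  simpa [div_eq_mul_inv] using this

lemma seam_preconnected : IsPreconnected (seam n) := by
  intro u v hu hv hcov hneu hnev
  by_contra hcon
  have hempty : seam n ∩ (u ∩ v) = ∅ := Set.not_nonempty_iff_eq_empty.mp hcon
  set A := {θ : ℝ | (ksl n θ ∩ u).Nonempty} with hA
  set B := {θ : ℝ | (ksl n θ ∩ v).Nonempty} with hB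
  have hsub : ∀ θ, ksl n θ ⊆ seam n := fun θ x hx => hx.1
  have hcover : A ∪ B = univ := by
    ext θ
    simp only [mem_union, mem_univ, iff_true]
    obtain ⟨x, hx⟩ := ksl_nonempty n h0 hsmul htri θ
    rcases hcov (hsub θ hx) with h | h
    · exact Or.inl ⟨x, hx, h⟩
    · exact Or.inr ⟨x, hx, h⟩
  have hdisj : A ∩ B = ∅ := by
    ext θ
    simp only [mem_inter_iff, mem_empty_iff_false, iff_false]
    rintro ⟨hθA, hθB⟩
    obtain ⟨x, hx⟩ := ksl_preconnected n h0 hsmul htri θ u v hu hv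
      (fun y hy => hcov (hsub θ hy)) hθA hθB
    have : x ∈ seam n ∩ (u ∩ v) := ⟨hsub θ hx.1, hx.2⟩
    rw [hempty] at this
    exact this
  have hkey : ∀ (w w' : Set (Fin 3 → ℝ)), IsOpen w → IsOpen w' →
      (∀ x ∈ seam n, x ∈ w ∪ w') → seam n ∩ (w ∩ w') = ∅ →
      IsClosed {θ : ℝ | (ksl n θ ∩ w').Nonempty} := by
    intro w w' hw hw' hcov' hemp
    apply IsSeqClosed.isClosed
    intro θk θ hmem htend
    have hy : ∀ k, ∃ y, y ∈ ksl n (θk k) ∩ w' := hmem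
    choose y hyk hyw using hy
    have hyseam : ∀ k, y k ∈ seam n := fun k => hsub _ (hyk k)
    obtain ⟨a, haseam, φ, hφ, hconv⟩ :=
      (seam_compact n h0 hsmul htri).tendsto_subseq hyseam
    have hθφ : Filter.Tendsto (θk ∘ φ) Filter.atTop (nhds θ) :=
      htend.comp hφ.tendsto_atTop
    have hconv1 : Filter.Tendsto (fun k => (y (φ k)) 1) Filter.atTop (nhds (a 1)) :=
      ((continuous_apply (1 : Fin 3)).tendsto a).comp hconv
    have hconv2 : Filter.Tendsto (fun k => (y (φ k)) 2) Filter.atTop (nhds (a 2)) :=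
      ((continuous_apply (2 : Fin 3)).tendsto a).comp hconv
    have hsinθ : Filter.Tendsto (fun k => Real.sin (θk (φ k))) Filter.atTop
        (nhds (Real.sin θ)) := (Real.continuous_sin.tendsto θ).comp hθφ
    have hcosθ : Filter.Tendsto (fun k => Real.cos (θk (φ k))) Filter.atTop
        (nhds (Real.cos θ)) := (Real.continuous_cos.tendsto θ).comp hθφ
    have haksl : a ∈ ksl n θ := by
      refine ⟨haseam, ?_, ?_⟩
      · have hlhs : Filter.Tendsto (fun k => (y (φ k)) 1 * Real.sin (θk (φ k)))
            Filter.atTop (nhds (a 1 * Real.sin θ)) := hconv1.mul hsinθ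
        have hrhs : Filter.Tendsto (fun k => (y (φ k)) 2 * Real.cos (θk (φ k)))
            Filter.atTop (nhds (a 2 * Real.cos θ)) := hconv2.mul hcosθ
        have heq : (fun k => (y (φ k)) 1 * Real.sin (θk (φ k)))
            = (fun k => (y (φ k)) 2 * Real.cos (θk (φ k))) := by
          funext k
          exact (hyk (φ k)).2.1
        rw [heq] at hlhs
        exact tendsto_nhds_unique hlhs hrhs
      · have hlhs : Filter.Tendsto
            (fun k => (y (φ k)) 1 * Real.cos (θk (φ k)) + (y (φ k)) 2 * Real.sin (θk (φ k)))
            Filter.atTop (nhds (a 1 * Real.cos θ + a 2 * Real.sin θ)) :=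
          (hconv1.mul hcosθ).add (hconv2.mul hsinθ)
        apply ge_of_tendsto hlhs
        filter_upwards with k
        exact (hyk (φ k)).2.2
    rcases hcov' a (hsub θ haksl) with hau | hav
    · exfalso
      have hev : ∀ᶠ k in Filter.atTop, y (φ k) ∈ w :=
        hconv.eventually (hw.mem_nhds hau)
      obtain ⟨k, hk⟩ := hev.exists
      have : y (φ k) ∈ seam n ∩ (w ∩ w') := ⟨hyseam (φ k), hk, hyw (φ k)⟩
      rw [hemp] at this
      exact this
    · exact ⟨a, haksl, hav⟩
  have hBclosed : IsClosed B :=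
    hkey u v hu hv (fun x hx => hcov hx) hempty
  have hAclosed : IsClosed A := by
    apply hkey v u hv hu
    · intro x hx
      rcases hcov hx with h | h
      · exact Or.inr h
      · exact Or.inl h
    · rw [inter_comm v u]
      exact hempty
  have hAeq : A = Bᶜ := by
    ext θ
    constructor
    · intro hθ hθB
      have : θ ∈ A ∩ B := ⟨hθ, hθB⟩
      rw [hdisj] at this
      exact this
    · intro hθ
      rcases (hcover.symm ▸ mem_univ θ : θ ∈ A ∪ B) with h | h
      · exact h
      · exact absurd h hθ
  have hAopen : IsOpen A := hAeq ▸ hBclosed.isOpen_compl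
  have hBopen : IsOpen B := by
    have : B = Aᶜ := by rw [hAeq, compl_compl]
    exact this ▸ hAclosed.isOpen_compl
  obtain ⟨xu, hxus, hxuu⟩ := hneu
  obtain ⟨xv, hxvs, hxvv⟩ := hnev
  obtain ⟨θu, hθu⟩ := seam_cover n h0 hsmul htri hxus
  obtain ⟨θv, hθv⟩ := seam_cover n h0 hsmul htri hxvs
  have hAne : (univ ∩ A).Nonempty := ⟨θu, mem_univ _, ⟨xu, hθu, hxuu⟩⟩
  have hBne : (univ ∩ B).Nonempty := ⟨θv, mem_univ _, ⟨xv, hθv, hxvv⟩⟩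
  obtain ⟨θ, -, hθ⟩ := isPreconnected_univ A B hAopen hBopen
    (by rw [hcover]) hAne hBne
  have : θ ∈ A ∩ B := hθ
  rw [hdisj] at this
  exact this

end

/-- For every norm on `ℝ³` there is an equilateral set of size 4. -/
theorem exists_equilateral_four_set
    (n : (Fin 3 → ℝ) → ℝ)
    (h0 : ∀ x, n x = 0 ↔ x = 0)
    (hsmul : ∀ (a : ℝ) (x), n (a • x) = |a| * n x)
    (htri : ∀ x y, n (x + y) ≤ n x + n y) :
    ∃ (x : Fin 4 → Fin 3 → ℝ) (c : ℝ), Function.Injective x ∧ 0 < c ∧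
      ∀ i j, i ≠ j → n (x i - x j) = c := by
  obtain ⟨u, huksl⟩ := ksl_nonempty n h0 hsmul htri 0
  obtain ⟨hun, huD⟩ : u ∈ seam n := huksl.1
  have hDn : n (Dvec n) = 1 := Dvec_norm n h0 hsmul htri
  have hsym : ∀ a b, n (a - b) = n (b - a) := peq_sub_comm n h0 hsmul htri
  have hneg : ∀ a, n (-a) = n a := peq_neg' n h0 hsmul htri
  have hn0 : n 0 = 0 := (h0 0).mpr rfl
  have hu'seam : Dvec n - u ∈ seam n := by
    constructor
    · rw [hsym]; exact huD
    · have he : Dvec n - u - Dvec n = -u := by module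
      rw [he, hneg, hun]
  have hfar : 1 ≤ n (Dvec n - u - u) := by
    have hhalf : u - Dvec n = (-(1/2) : ℝ) • ((Dvec n - u - u) + Dvec n) := by module
    have h1 : n (u - Dvec n) ≤ (1/2) * (n (Dvec n - u - u) + n (Dvec n)) := by
      calc n (u - Dvec n) = (1/2) * n ((Dvec n - u - u) + Dvec n) := by
            rw [hhalf, hsmul]; norm_num
        _ ≤ (1/2) * (n (Dvec n - u - u) + n (Dvec n)) := by
            have := htri (Dvec n - u - u) (Dvec n); linarith
    rw [huD, hDn] at h1
    linarith
  have hcont : ContinuousOn (fun x : Fin 3 → ℝ => n (x - u)) (seam n) :=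
    ((peq_cont n h0 hsmul htri).comp (continuous_id.sub continuous_const)).continuousOn
  have hivt := (seam_preconnected n h0 hsmul htri).intermediate_value
    (⟨hun, huD⟩ : u ∈ seam n) hu'seam hcont
  have h1mem : (1:ℝ) ∈ Set.Icc (n (u - u)) (n (Dvec n - u - u)) := by
    rw [sub_self, hn0]
    exact ⟨by norm_num, hfar⟩
  obtain ⟨y, hyseam, hyu⟩ := hivt h1mem
  simp only at hyu
  obtain ⟨hyn, hyD⟩ := hyseam
  -- all twelve ordered distances
  have d01 : n ((0 : Fin 3 → ℝ) - Dvec n) = 1 := by rw [zero_sub, hneg]; exact hDn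
  have d02 : n ((0 : Fin 3 → ℝ) - u) = 1 := by rw [zero_sub, hneg]; exact hun
  have d03 : n ((0 : Fin 3 → ℝ) - y) = 1 := by rw [zero_sub, hneg]; exact hyn
  have d10 : n (Dvec n - 0) = 1 := by rw [sub_zero]; exact hDn
  have d20 : n (u - 0) = 1 := by rw [sub_zero]; exact hun
  have d30 : n (y - 0) = 1 := by rw [sub_zero]; exact hyn
  have d21 : n (u - Dvec n) = 1 := huD
  have d12 : n (Dvec n - u) = 1 := by rw [hsym]; exact huD
  have d31 : n (y - Dvec n) = 1 := hyD
  have d13 : n (Dvec n - y) = 1 := by rw [hsym]; exact hyD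
  have d32 : n (y - u) = 1 := hyu
  have d23 : n (u - y) = 1 := by rw [hsym]; exact hyu
  have hpair : ∀ i j : Fin 4, i ≠ j →
      n (![0, Dvec n, u, y] i - ![0, Dvec n, u, y] j) = 1 := by
    intro i j hij
    fin_cases i <;> fin_cases j <;>
      simp only [Matrix.cons_val_zero, Matrix.cons_val_one, Matrix.cons_val_two,
        Matrix.cons_val_three, Matrix.head_cons, Matrix.tail_cons] <;>
      first
        | exact absurd rfl hij
        | exact d01 | exact d02 | exact d03
        | exact d10 | exact d20 | exact d30
        | exact d12 | exact d21 | exact d13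
        | exact d31 | exact d23 | exact d32
  refine ⟨![0, Dvec n, u, y], 1, ?_, one_pos, hpair⟩
  intro i j hij
  by_contra hne
  have h := hpair i j hne
  rw [hij, sub_self, hn0] at h
  norm_num at h
end
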